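/- arXiv:2306.02303 — 3 statements merged into one kernel-verified Lean document; each statement's English description precedes it below -/
import Mathlib

section
/- Let G = (N, Σ, S, R, p) be a tight, trim probabilistic context-free grammar in Chomsky normal form and let w = w₁ ⋯ w_N ∈ Σ* be a string. Then for all X ∈ N and all indices 1 ≤ i < k ≤ N, the prefix probability satisfies the recursion p_π(i, k | X) = ∑_{Y,Z ∈ N} E_lc(Y Z | X) · ∑_{j=i}^{k-1} β(i, j | Y) · p_π(j+1, k | Z). -/
open scoped ENNReal

/-- A probabilistic context-free grammar in Chomsky normal form, with non-terminals `N`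
and terminal alphabet `T`.  Rules are represented densely: `pbin X Y Z` is the probability
of the binary rule `X → Y Z`, `pterm X a` is the probability of the terminal rule `X → a`,
and `peps` is the probability of the rule `S → ε` (the only ε-rule allowed in CNF); a rule
is "in `R`" exactly when its probability is non-zero.  The weighting function is locally
normalized: for every non-terminal `X` appearing on the left-hand side of some rule, the
probabilities of all rules with left-hand side `X` sum to `1`. -/
structure CNFPCFG (N T : Type) [Fintype N] [Fintype T] [DecidableEq N] where
  S : N
  pbin : N → N → N → ℝ≥0∞
  pterm : N → T → ℝ≥0∞
  peps : ℝ≥0∞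
  locally_normalized : ∀ X : N,
    ((∃ Y Z, pbin X Y Z ≠ 0) ∨ (∃ a, pterm X a ≠ 0) ∨ (X = S ∧ peps ≠ 0)) →
      (∑ Y, ∑ Z, pbin X Y Z) + (∑ a, pterm X a) + (if X = S then peps else 0) = 1

/-- Derivation (sub)trees of a CNF grammar with a non-empty yield: each internal node is
labelled by a non-terminal and corresponds to a binary rule, and each leaf corresponds to
a terminal rule. -/
inductive DTree (N T : Type) : Type where
  | leaf (X : N) (a : T) : DTree N T
  | node (X : N) (l r : DTree N T) : DTree N T

namespace DTree

/-- The non-terminal at the root of a derivation subtree. -/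
def root {N T : Type} : DTree N T → N
  | leaf X _ => X
  | node X _ _ => X

/-- The yield of a derivation subtree: its leaves read from left to right. -/
def yield {N T : Type} : DTree N T → List T
  | leaf _ a => [a]
  | node _ l r => l.yield ++ r.yield

end DTree

variable {N T : Type} [Fintype N] [Fintype T] [DecidableEq N]

/-- The probability of a derivation subtree: the product of the probabilities of all the
production rules used in it. -/
noncomputable def treeProb (G : CNFPCFG N T) : DTree N T → ℝ≥0∞
  | .leaf X a => G.pterm X a
  | .node X l r => G.pbin X l.root r.root * treeProb G l * treeProb G r

/-- The (1-based, inclusive) substring `w_i ⋯ w_k` of `w`. -/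
def substr {T : Type} (w : List T) (i k : ℕ) : List T := (w.take k).drop (i - 1)

/-- The inside probability `β(i, k ∣ X)`: the total probability of all derivation subtrees
rooted at `X` whose yield is `w_i ⋯ w_k`. -/
noncomputable def inside (G : CNFPCFG N T) (w : List T) (i k : ℕ) (X : N) : ℝ≥0∞ :=
  ∑' τ : {τ : DTree N T // τ.root = X ∧ τ.yield = substr w i k}, treeProb G τ.1

/-- The prefix probability `p_π(i, k ∣ X) = ∑_{u ∈ Σ*} p(X ⇒* w_i ⋯ w_k u)`: the total
probability of derivations from `X` whose yield begins with `w_i ⋯ w_k`. -/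
noncomputable def prefixProb (G : CNFPCFG N T) (w : List T) (i k : ℕ) (X : N) : ℝ≥0∞ :=
  ∑' u : List T,
    ∑' τ : {τ : DTree N T // τ.root = X ∧ τ.yield = substr w i k ++ u}, treeProb G τ.1

/-- A leftmost partial derivation from `X` that leaves some `Y ∈ N` as its leftmost symbol
repeatedly rewrites the leftmost non-terminal with a binary rule; it is therefore recorded
by its left spine: a list of steps `(A, B)`, each rewriting the current leftmost
non-terminal `C` to `A B`.  `spineProb G X c` is the probability of this partial
derivation. -/
noncomputable def spineProb (G : CNFPCFG N T) : N → List (N × N) → ℝ≥0∞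
  | _, [] => 1
  | X, (A, B) :: rest => G.pbin X A B * spineProb G A rest

/-- The leftmost symbol remaining after performing the left-spine steps `c` from `X`. -/
def spineEnd {N : Type} : N → List (N × N) → N
  | X, [] => X
  | _, (A, _) :: rest => spineEnd A rest

/-- The left-corner expectation `E_lc(Y ∣ X) = ∑_{α ∈ N*} p(X ⇒* Y α)`: the total
probability of leftmost partial derivations from `X` whose leftmost remaining symbol
is `Y`. -/
noncomputable def Elc (G : CNFPCFG N T) (X Y : N) : ℝ≥0∞ :=
  ∑' c : {c : List (N × N) // spineEnd X c = Y}, spineProb G X c.1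

/-- The two-symbol left-corner expectation
`E_lc(Y Z ∣ X) = ∑_{X' ∈ N} E_lc(X' ∣ X) · p(X' → Y Z)`. -/
noncomputable def ElcBin (G : CNFPCFG N T) (X Y Z : N) : ℝ≥0∞ :=
  ∑ X' : N, Elc G X X' * G.pbin X' Y Z

/-- A PCFG is tight if it constitutes a valid probability distribution: the total
probability mass of (finite) derivation trees rooted at the start symbol is `1`
(equivalently, infinite derivation trees carry zero probability mass). -/
def Tight (G : CNFPCFG N T) : Prop :=
  G.peps + ∑' τ : {τ : DTree N T // τ.root = G.S}, treeProb G τ.1 = 1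

/-- Reachability of a non-terminal from the start symbol via production rules. -/
inductive Reach (G : CNFPCFG N T) : N → Prop where
  | start : Reach G G.S
  | left {X Y Z : N} : Reach G X → G.pbin X Y Z ≠ 0 → Reach G Y
  | right {X Y Z : N} : Reach G X → G.pbin X Y Z ≠ 0 → Reach G Z

/-- A PCFG is trim if every non-terminal is reachable from the start symbol. -/
def Trim (G : CNFPCFG N T) : Prop := ∀ X : N, Reach G X

set_option linter.unusedSectionVars false
noncomputable section
open Classical

namespace PFXaux

-- fiber partition of a tsum
lemma tsum_fiber {α β : Type*} (g : α → β) (f : α → ℝ≥0∞) :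
    ∑' a, f a = ∑' b : β, ∑' x : {x // g x = b}, f x.1 := by
  rw [← (Equiv.sigmaFiberEquiv g).tsum_eq, ENNReal.tsum_sigma']
  rfl

lemma tsum_subtype_congr {α : Type*} {P Q : α → Prop} (f : α → ℝ≥0∞)
    (h : ∀ a, P a ↔ Q a) :
    ∑' x : {a // P a}, f x.1 = ∑' x : {a // Q a}, f x.1 := by
  rw [← (Equiv.subtypeEquivRight h).tsum_eq]
  rfl

lemma tsum_subtype_empty {α : Type*} {P : α → Prop} (f : α → ℝ≥0∞)
    (h : ∀ a, ¬ P a) : ∑' x : {a // P a}, f x.1 = 0 := by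
  have : IsEmpty {a // P a} := ⟨fun x => h x.1 x.2⟩
  exact tsum_empty

-- collapse inner subtype of subtype
lemma tsum_subsub {α : Type*} {P Q : α → Prop} (f : α → ℝ≥0∞) :
    ∑' x : {y : {a // P a} // Q y.1}, f x.1.1 = ∑' x : {a // P a ∧ Q a}, f x.1 := by
  rw [← (Equiv.subtypeSubtypeEquivSubtypeInter P Q).tsum_eq]
  rfl

lemma tsum_fiber_subtype {α β : Type*} {P : α → Prop} (g : α → β) (f : α → ℝ≥0∞) :
    ∑' x : {a // P a}, f x.1 = ∑' b : β, ∑' x : {a // P a ∧ g a = b}, f x.1 := by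
  rw [tsum_fiber (fun x : {a // P a} => g x.1) (fun x => f x.1)]
  exact tsum_congr fun b => tsum_subsub (Q := fun a => g a = b) f

lemma tsum_pair_prod {α β : Type*} {P : α → Prop} {Q : β → Prop}
    (f : α → ℝ≥0∞) (g : β → ℝ≥0∞) :
    ∑' x : {p : α × β // P p.1 ∧ Q p.2}, f x.1.1 * g x.1.2
      = (∑' a : {a // P a}, f a.1) * ∑' b : {b // Q b}, g b.1 := by
  rw [← (Equiv.subtypeProdEquivProd (p := P) (q := Q)).symm.tsum_eq]
  have h1 : ∀ c : {a // P a} × {b // Q b},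
      f (((Equiv.subtypeProdEquivProd (p := P) (q := Q)).symm c).1 : α × β).1 *
        g (((Equiv.subtypeProdEquivProd (p := P) (q := Q)).symm c).1 : α × β).2
      = f c.1.1 * g c.2.1 := fun c => rfl
  rw [tsum_congr h1, ENNReal.tsum_prod']
  have h2 : ∀ a : {a // P a}, (∑' b : {b // Q b}, f a.1 * g b.1) = f a.1 * ∑' b : {b // Q b}, g b.1 :=
    fun a => ENNReal.tsum_mul_left
  rw [tsum_congr h2]
  exact ENNReal.tsum_mul_right

-- termwise equality from sum equality
lemma sum_eq_of_le_of_sum_eq {ι : Type*} {s : Finset ι} {f g : ι → ℝ≥0∞}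
    (hle : ∀ i ∈ s, f i ≤ g i) (hsum : ∑ i ∈ s, f i = ∑ i ∈ s, g i)
    (hfin : ∑ i ∈ s, g i ≠ ⊤) : ∀ i ∈ s, f i = g i := by
  have hffin : ∑ i ∈ s, f i ≠ ⊤ := hsum ▸ hfin
  have key : ∑ i ∈ s, f i + ∑ i ∈ s, (g i - f i) = ∑ i ∈ s, g i := by
    rw [← Finset.sum_add_distrib]
    exact Finset.sum_congr rfl fun i hi => add_tsub_cancel_of_le (hle i hi)
  rw [hsum] at key
  have h0 : ∑ i ∈ s, (g i - f i) = 0 := by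
    have h := (ENNReal.add_right_inj (a := ∑ i ∈ s, g i) hfin
      (b := ∑ i ∈ s, (g i - f i)) (c := 0))
    exact h.mp (by rw [add_zero]; exact key)
  intro i hi
  have : g i - f i = 0 := by
    have := Finset.sum_eq_zero_iff.mp h0 i hi
    exact this
  exact le_antisymm (hle i hi) (tsub_eq_zero_iff_le.mp this)


section Trees
variable {N T : Type} [Fintype N] [Fintype T] [DecidableEq N]

lemma yield_ne_nil (τ : DTree N T) : τ.yield ≠ [] := by
  induction τ with
  | leaf X a => simp [DTree.yield]
  | node X l r ihl ihr =>
    show l.yield ++ r.yield ≠ []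
    exact fun h => ihl (List.append_eq_nil_iff.mp h).1

lemma yield_len_pos (τ : DTree N T) : 0 < τ.yield.length :=
  List.length_pos_iff.mpr (yield_ne_nil τ)

def isNodeB : DTree N T → Bool
  | .leaf _ _ => false
  | .node _ _ _ => true

def nodeEquiv (X : N) (P : DTree N T → Prop) (hleaf : ∀ a, ¬ P (.leaf X a)) :
    {τ : DTree N T // τ.root = X ∧ P τ} ≃
      Σ Y : N, Σ Z : N, {lr : DTree N T × DTree N T //
        (lr.1.root = Y ∧ lr.2.root = Z) ∧ P (.node X lr.1 lr.2)} where
  toFun x :=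
    match x with
    | ⟨.leaf X' a, h⟩ => absurd h.2 (by cases h.1; exact hleaf a)
    | ⟨.node X' l r, h⟩ => ⟨l.root, r.root, ⟨(l, r), ⟨rfl, rfl⟩, by cases h.1; exact h.2⟩⟩
  invFun y :=
    match y with
    | ⟨Y, Z, ⟨(l, r), h⟩⟩ => ⟨.node X l r, rfl, h.2⟩
  left_inv := by
    rintro ⟨τ, h⟩
    cases τ with
    | leaf X' a => exact absurd h.2 (by cases h.1; exact hleaf a)
    | node X' l r =>
      obtain ⟨h1, h2⟩ := h
      cases h1
      rfl
  right_inv := by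
    rintro ⟨Y, Z, ⟨⟨l, r⟩, ⟨⟨hl, hr⟩, hq⟩⟩⟩
    cases hl; cases hr; rfl

lemma tsum_node (G : CNFPCFG N T) (X : N) (P : DTree N T → Prop)
    (hleaf : ∀ a, ¬ P (.leaf X a)) :
    ∑' τ : {τ : DTree N T // τ.root = X ∧ P τ}, treeProb G τ.1
      = ∑ Y : N, ∑ Z : N, G.pbin X Y Z *
          ∑' lr : {lr : DTree N T × DTree N T //
              (lr.1.root = Y ∧ lr.2.root = Z) ∧ P (.node X lr.1 lr.2)},
            treeProb G lr.1.1 * treeProb G lr.1.2 := by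
  rw [← Equiv.tsum_eq (nodeEquiv X P hleaf).symm (fun τ => treeProb G τ.1)]
  rw [ENNReal.tsum_sigma', tsum_fintype]
  refine Finset.sum_congr rfl fun Y _ => ?_
  have : ∀ Y : N, (∑' z : Σ Z : N, {lr : DTree N T × DTree N T //
        (lr.1.root = Y ∧ lr.2.root = Z) ∧ P (.node X lr.1 lr.2)},
        treeProb G ((nodeEquiv X P hleaf).symm ⟨Y, z⟩).1)
      = ∑' (Z : N) (lr : {lr : DTree N T × DTree N T //
        (lr.1.root = Y ∧ lr.2.root = Z) ∧ P (.node X lr.1 lr.2)}),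
        treeProb G ((nodeEquiv X P hleaf).symm ⟨Y, Z, lr⟩).1 := fun Y =>
    ENNReal.tsum_sigma' _
  rw [this, tsum_fintype]
  refine Finset.sum_congr rfl fun Z _ => ?_
  rw [← ENNReal.tsum_mul_left]
  refine tsum_congr fun lr => ?_
  obtain ⟨⟨l, r⟩, ⟨⟨hl, hr⟩, hq⟩⟩ := lr
  cases hl; cases hr
  exact mul_assoc _ _ _

def leafEquiv (X : N) (P : DTree N T → Prop) :
    {τ : DTree N T // (τ.root = X ∧ P τ) ∧ isNodeB τ = false} ≃ {a : T // P (.leaf X a)} where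
  toFun x :=
    match x with
    | ⟨.leaf X' a, h⟩ => ⟨a, by cases h.1.1; exact h.1.2⟩
    | ⟨.node X' l r, h⟩ => absurd h.2 (by simp [isNodeB])
  invFun y := ⟨.leaf X y.1, ⟨rfl, y.2⟩, rfl⟩
  left_inv := by
    rintro ⟨τ, h⟩
    cases τ with
    | leaf X' a =>
      obtain ⟨⟨h1, h2⟩, h3⟩ := h
      cases h1
      rfl
    | node X' l r => exact absurd h.2 (by simp [isNodeB])
  right_inv := by rintro ⟨a, h⟩; rfl

lemma tsum_tree_split (G : CNFPCFG N T) (X : N) (P : DTree N T → Prop) :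
    ∑' τ : {τ : DTree N T // τ.root = X ∧ P τ}, treeProb G τ.1
      = (∑' a : {a : T // P (.leaf X a)}, G.pterm X a.1)
        + ∑ Y : N, ∑ Z : N, G.pbin X Y Z *
          ∑' lr : {lr : DTree N T × DTree N T //
              (lr.1.root = Y ∧ lr.2.root = Z) ∧ P (.node X lr.1 lr.2)},
            treeProb G lr.1.1 * treeProb G lr.1.2 := by
  rw [tsum_fiber_subtype (P := fun τ : DTree N T => τ.root = X ∧ P τ) isNodeB
    (fun τ => treeProb G τ)]
  rw [tsum_bool]
  congr 1
  · calc ∑' x : {τ : DTree N T // (τ.root = X ∧ P τ) ∧ isNodeB τ = false}, treeProb G x.1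
        = ∑' x : {τ : DTree N T // (τ.root = X ∧ P τ) ∧ isNodeB τ = false},
            G.pterm X ((leafEquiv X P) x).1 := by
          refine tsum_congr fun x => ?_
          obtain ⟨τ, h⟩ := x
          cases τ with
          | leaf X' a =>
            obtain ⟨⟨h1, h2⟩, h3⟩ := h
            cases h1
            rfl
          | node X' l r => exact absurd h.2 (by simp [isNodeB])
      _ = ∑' a : {a : T // P (.leaf X a)}, G.pterm X a.1 :=
          Equiv.tsum_eq (leafEquiv X P) (fun a => G.pterm X a.1)
  · have h1 : ∀ τ : DTree N T,
        ((τ.root = X ∧ P τ) ∧ isNodeB τ = true) ↔ (τ.root = X ∧ (P τ ∧ isNodeB τ = true)) := by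
      intro τ; tauto
    rw [tsum_subtype_congr (fun τ => treeProb G τ) h1]
    rw [tsum_node G X (fun τ => P τ ∧ isNodeB τ = true)
      (fun a h => by simpa [isNodeB] using h.2)]
    refine Finset.sum_congr rfl fun Y _ => Finset.sum_congr rfl fun Z _ => ?_
    congr 1
    refine tsum_subtype_congr
      (fun lr : DTree N T × DTree N T => treeProb G lr.1 * treeProb G lr.2) fun lr => ?_
    simp [isNodeB]

end Trees


section Zpart
variable {N T : Type} [Fintype N] [Fintype T] [DecidableEq N]

/-- total mass of derivation trees rooted at `X` -/
def ZT (G : CNFPCFG N T) (X : N) : ℝ≥0∞ :=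
  ∑' τ : {τ : DTree N T // τ.root = X}, treeProb G τ.1

lemma ZT_eq (G : CNFPCFG N T) (X : N) :
    ZT G X = (∑ a, G.pterm X a)
      + ∑ Y : N, ∑ Z : N, G.pbin X Y Z * (ZT G Y * ZT G Z) := by
  have h0 : ZT G X = ∑' τ : {τ : DTree N T // τ.root = X ∧ True}, treeProb G τ.1 := by
    rw [ZT]
    exact tsum_subtype_congr (fun τ => treeProb G τ) (by simp)
  rw [h0, tsum_tree_split]
  congr 1
  · calc (∑' a : {a : T // True}, G.pterm X a.1)
        = ∑' a : T, G.pterm X a :=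
          Equiv.tsum_eq (Equiv.subtypeUnivEquiv (fun a : T => trivial)) (fun a : T => G.pterm X a)
      _ = ∑ a, G.pterm X a := tsum_fintype _
  · refine Finset.sum_congr rfl fun Y _ => Finset.sum_congr rfl fun Z _ => ?_
    congr 1
    rw [tsum_subtype_congr (fun lr : DTree N T × DTree N T => treeProb G lr.1 * treeProb G lr.2)
      (Q := fun lr : DTree N T × DTree N T => lr.1.root = Y ∧ lr.2.root = Z) (by tauto)]
    exact tsum_pair_prod (P := fun l : DTree N T => l.root = Y)
      (Q := fun r : DTree N T => r.root = Z) (treeProb G) (treeProb G)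

lemma mass_le_one (G : CNFPCFG N T) (X : N) :
    (∑ Y : N, ∑ Z : N, G.pbin X Y Z) + (∑ a, G.pterm X a) ≤ 1 := by
  by_cases h : (∃ Y Z, G.pbin X Y Z ≠ 0) ∨ (∃ a, G.pterm X a ≠ 0) ∨ (X = G.S ∧ G.peps ≠ 0)
  · rw [← G.locally_normalized X h]
    exact self_le_add_right _ _
  · push_neg at h
    obtain ⟨h1, h2, _⟩ := h
    have hb : ∀ Y Z, G.pbin X Y Z = 0 := by
      intro Y Z; by_contra hc; exact hc (by simpa using h1 Y Z) |>.elim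
    have ht : ∀ a, G.pterm X a = 0 := fun a => by simpa using h2 a
    simp [hb, ht]

lemma pbin_le_one (G : CNFPCFG N T) (X Y Z : N) : G.pbin X Y Z ≤ 1 := by
  calc G.pbin X Y Z ≤ ∑ Y' : N, ∑ Z' : N, G.pbin X Y' Z' := by
        refine le_trans ?_ (Finset.single_le_sum (f := fun Y' => ∑ Z' : N, G.pbin X Y' Z')
          (fun _ _ => zero_le) (Finset.mem_univ Y))
        exact Finset.single_le_sum (fun _ _ => zero_le) (Finset.mem_univ Z)
    _ ≤ 1 := le_trans (self_le_add_right _ _) (mass_le_one G X)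

/-- truncated partition function -/
def Zcap (G : CNFPCFG N T) : ℕ → N → ℝ≥0∞
  | 0, _ => 0
  | n+1, X => (∑ a, G.pterm X a) + ∑ Y : N, ∑ Z : N, G.pbin X Y Z * (Zcap G n Y * Zcap G n Z)

lemma Zcap_le_one (G : CNFPCFG N T) : ∀ n X, Zcap G n X ≤ 1 := by
  intro n
  induction n with
  | zero => intro X; simp [Zcap]
  | succ n ih =>
    intro X
    have hstep : ∑ Y : N, ∑ Z : N, G.pbin X Y Z * (Zcap G n Y * Zcap G n Z)
        ≤ ∑ Y : N, ∑ Z : N, G.pbin X Y Z := by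
      refine Finset.sum_le_sum fun Y _ => Finset.sum_le_sum fun Z _ => ?_
      calc G.pbin X Y Z * (Zcap G n Y * Zcap G n Z)
          ≤ G.pbin X Y Z * (1 * 1) := mul_le_mul' le_rfl (mul_le_mul' (ih Y) (ih Z))
        _ = G.pbin X Y Z := by rw [one_mul, mul_one]
    calc Zcap G (n+1) X ≤ (∑ a, G.pterm X a) + ∑ Y : N, ∑ Z : N, G.pbin X Y Z :=
          add_le_add le_rfl hstep
      _ = (∑ Y : N, ∑ Z : N, G.pbin X Y Z) + (∑ a, G.pterm X a) := add_comm _ _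
      _ ≤ 1 := mass_le_one G X

/-- height of a derivation tree -/
def ht : DTree N T → ℕ
  | .leaf _ _ => 1
  | .node _ l r => max (ht l) (ht r) + 1

lemma ht_pos (τ : DTree N T) : 0 < ht τ := by
  cases τ <;> simp [ht]

lemma tsum_ht_lt_le (G : CNFPCFG N T) : ∀ n X,
    (∑' τ : {τ : DTree N T // τ.root = X ∧ ht τ < n}, treeProb G τ.1) ≤ Zcap G n X := by
  intro n
  induction n with
  | zero =>
    intro X
    rw [tsum_subtype_empty (fun τ => treeProb G τ) (fun τ h => Nat.not_lt_zero _ h.2)]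
    exact zero_le
  | succ n ih =>
    intro X
    rw [tsum_tree_split G X (fun τ => ht τ < n+1)]
    refine add_le_add ?_ ?_
    · calc (∑' a : {a : T // ht (DTree.leaf X a : DTree N T) < n+1}, G.pterm X a.1)
          ≤ ∑' a : T, G.pterm X a :=
            ENNReal.tsum_comp_le_tsum_of_injective Subtype.val_injective (fun a => G.pterm X a)
        _ = ∑ a, G.pterm X a := tsum_fintype _
    · refine Finset.sum_le_sum fun Y _ => Finset.sum_le_sum fun Z _ => ?_
      refine mul_le_mul' le_rfl ?_
      have hcong : ∀ lr : DTree N T × DTree N T,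
          ((lr.1.root = Y ∧ lr.2.root = Z) ∧ ht (DTree.node X lr.1 lr.2) < n+1)
            ↔ ((lr.1.root = Y ∧ ht lr.1 < n) ∧ (lr.2.root = Z ∧ ht lr.2 < n)) := by
        intro lr
        have hh : ht (DTree.node X lr.1 lr.2) = max (ht lr.1) (ht lr.2) + 1 := rfl
        rw [hh, Nat.add_lt_add_iff_right, max_lt_iff]
        tauto
      rw [tsum_subtype_congr
        (fun lr : DTree N T × DTree N T => treeProb G lr.1 * treeProb G lr.2) hcong]
      rw [tsum_pair_prod (P := fun l : DTree N T => l.root = Y ∧ ht l < n)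
        (Q := fun r : DTree N T => r.root = Z ∧ ht r < n) (treeProb G) (treeProb G)]
      exact mul_le_mul' (ih Y) (ih Z)

lemma ZT_le_one (G : CNFPCFG N T) (X : N) : ZT G X ≤ 1 := by
  rw [ZT, tsum_fiber_subtype (P := fun τ : DTree N T => τ.root = X) ht
    (fun τ => treeProb G τ)]
  rw [ENNReal.tsum_eq_iSup_nat]
  refine iSup_le fun n => ?_
  have key : ∑ m ∈ Finset.range n,
      (∑' τ : {τ : DTree N T // τ.root = X ∧ ht τ = m}, treeProb G τ.1)
      = ∑' τ : {τ : DTree N T // τ.root = X ∧ ht τ < n}, treeProb G τ.1 := by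
    rw [tsum_fiber_subtype (P := fun τ : DTree N T => τ.root = X ∧ ht τ < n) ht
      (fun τ => treeProb G τ)]
    rw [tsum_eq_sum (s := Finset.range n) (fun m hm => by
      refine tsum_subtype_empty (fun τ => treeProb G τ) fun τ hτ => ?_
      exact hm (Finset.mem_range.mpr (hτ.2 ▸ hτ.1.2)))]
    refine Finset.sum_congr rfl fun m hm => ?_
    refine tsum_subtype_congr (fun τ => treeProb G τ) fun τ => ?_
    have := Finset.mem_range.mp hm
    constructor
    · rintro ⟨h1, h2⟩; exact ⟨⟨h1, h2 ▸ this⟩, h2⟩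
    · rintro ⟨⟨h1, _⟩, h3⟩; exact ⟨h1, h3⟩
  rw [key]
  exact le_trans (tsum_ht_lt_le G n X) (Zcap_le_one G n X)

end Zpart

section TightTrim
variable {N T : Type} [Fintype N] [Fintype T] [DecidableEq N]

lemma child_one_of (G : CNFPCFG N T) {X : N}
    (hX : (if X = G.S then G.peps else 0) + ZT G X = 1)
    {Y Z : N} (hbin : G.pbin X Y Z ≠ 0) : ZT G Y = 1 ∧ ZT G Z = 1 := by
  have hnorm := G.locally_normalized X (Or.inl ⟨Y, Z, hbin⟩)
  set A := ∑ Y' : N, ∑ Z' : N, G.pbin X Y' Z' with hA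
  set B := ∑ a, G.pterm X a with hB
  set C := if X = G.S then G.peps else 0 with hC
  set A' := ∑ Y' : N, ∑ Z' : N, G.pbin X Y' Z' * (ZT G Y' * ZT G Z') with hA'
  have h1 : (C + B) + A = 1 := by rw [← hnorm]; ring
  have h2 : (C + B) + A' = 1 := by
    rw [← hX, ZT_eq G X, ← hA', ← hB, hC]; ring
  have hCB : C + B ≠ ⊤ := by
    refine ne_top_of_le_ne_top ENNReal.one_ne_top ?_
    calc C + B ≤ (C + B) + A := le_self_add
      _ = 1 := h1
  have hAfin : A ≠ ⊤ := by
    refine ne_top_of_le_ne_top ENNReal.one_ne_top ?_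
    calc A ≤ (C + B) + A := le_add_self
      _ = 1 := h1
  have hAA : A' = A := (ENNReal.add_right_inj hCB).mp (h2.trans h1.symm)
  have hle : ∀ Y' ∈ Finset.univ (α := N), ∀ Z' ∈ Finset.univ (α := N),
      G.pbin X Y' Z' * (ZT G Y' * ZT G Z') ≤ G.pbin X Y' Z' := by
    intro Y' _ Z' _
    calc G.pbin X Y' Z' * (ZT G Y' * ZT G Z') ≤ G.pbin X Y' Z' * (1 * 1) :=
        mul_le_mul' le_rfl (mul_le_mul' (ZT_le_one G Y') (ZT_le_one G Z'))
      _ = G.pbin X Y' Z' := by rw [one_mul, mul_one]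
  have houter := sum_eq_of_le_of_sum_eq
    (f := fun Y' => ∑ Z' : N, G.pbin X Y' Z' * (ZT G Y' * ZT G Z'))
    (g := fun Y' => ∑ Z' : N, G.pbin X Y' Z')
    (fun Y' hY' => Finset.sum_le_sum (hle Y' hY')) hAA hAfin Y (Finset.mem_univ Y)
  have hinnerfin : ∑ Z' : N, G.pbin X Y Z' ≠ ⊤ := by
    refine ne_top_of_le_ne_top hAfin ?_
    exact Finset.single_le_sum (f := fun Y' => ∑ Z' : N, G.pbin X Y' Z')
      (fun _ _ => zero_le) (Finset.mem_univ Y)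
  have hterm := sum_eq_of_le_of_sum_eq
    (f := fun Z' => G.pbin X Y Z' * (ZT G Y * ZT G Z'))
    (g := fun Z' => G.pbin X Y Z')
    (hle Y (Finset.mem_univ Y)) houter hinnerfin Z (Finset.mem_univ Z)
  have hbfin : G.pbin X Y Z ≠ ⊤ := ne_top_of_le_ne_top ENNReal.one_ne_top (pbin_le_one G X Y Z)
  have hmul : ZT G Y * ZT G Z = 1 := by
    have h : G.pbin X Y Z * (ZT G Y * ZT G Z) = G.pbin X Y Z := hterm
    exact (ENNReal.mul_right_inj hbin hbfin).mp (by rw [mul_one]; exact h)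
  have hY1 : ZT G Y = 1 := by
    refine le_antisymm (ZT_le_one G Y) ?_
    calc (1:ℝ≥0∞) = ZT G Y * ZT G Z := hmul.symm
      _ ≤ ZT G Y * 1 := mul_le_mul' le_rfl (ZT_le_one G Z)
      _ = ZT G Y := mul_one _
  have hZ1 : ZT G Z = 1 := by
    refine le_antisymm (ZT_le_one G Z) ?_
    calc (1:ℝ≥0∞) = ZT G Y * ZT G Z := hmul.symm
      _ ≤ 1 * ZT G Z := mul_le_mul' (ZT_le_one G Y) le_rfl
      _ = ZT G Z := one_mul _
  exact ⟨hY1, hZ1⟩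

lemma reach_one (G : CNFPCFG N T) (hTight : Tight G) :
    ∀ X : N, Reach G X → (if X = G.S then G.peps else 0) + ZT G X = 1 := by
  intro X hX
  have peps_zero_of : ∀ W : N, W = G.S → ZT G W = 1 → G.peps = 0 := by
    intro W hW h1
    have ht : G.peps + ZT G G.S = 1 := hTight
    rw [← hW, h1] at ht
    have : (1:ℝ≥0∞) + G.peps = 1 + 0 := by rw [add_zero, add_comm]; exact ht
    exact (ENNReal.add_right_inj ENNReal.one_ne_top).mp this
  induction hX with
  | start => rw [if_pos rfl]; exact hTight
  | @left X' Y' Z' hr hbin ih =>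
    obtain ⟨hY, _⟩ := child_one_of G ih hbin
    by_cases hYS : Y' = G.S
    · rw [if_pos hYS, peps_zero_of Y' hYS hY, hY, zero_add]
    · rw [if_neg hYS, hY, zero_add]
  | @right X' Y' Z' hr hbin ih =>
    obtain ⟨_, hZ⟩ := child_one_of G ih hbin
    by_cases hZS : Z' = G.S
    · rw [if_pos hZS, peps_zero_of Z' hZS hZ, hZ, zero_add]
    · rw [if_neg hZS, hZ, zero_add]

lemma ZT_child (G : CNFPCFG N T) (hTight : Tight G) (hTrim : Trim G)
    {X Y Z : N} (hbin : G.pbin X Y Z ≠ 0) : ZT G Y = 1 ∧ ZT G Z = 1 :=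
  child_one_of G (reach_one G hTight X (hTrim X)) hbin

/-- key cancellation: multiplying by the mass of a child is harmless -/
lemma pbin_mul_ZT (G : CNFPCFG N T) (hTight : Tight G) (hTrim : Trim G)
    (X Y Z : N) (c : ℝ≥0∞) : G.pbin X Y Z * c * ZT G Z = G.pbin X Y Z * c := by
  by_cases hbin : G.pbin X Y Z = 0
  · simp [hbin]
  · rw [(ZT_child G hTight hTrim hbin).2, mul_one]

end TightTrim

section Main
variable {N T : Type} [Fintype N] [Fintype T] [DecidableEq N]

/-- inside probability, by string -/
def InT (G : CNFPCFG N T) (t : List T) (Y : N) : ℝ≥0∞ :=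
  ∑' τ : {τ : DTree N T // τ.root = Y ∧ τ.yield = t}, treeProb G τ.1

/-- prefix probability, by string -/
def PreT (G : CNFPCFG N T) (s : List T) (X : N) : ℝ≥0∞ :=
  ∑' τ : {τ : DTree N T // τ.root = X ∧ s <+: τ.yield}, treeProb G τ.1

lemma prefixProb_eq_PreT (G : CNFPCFG N T) (w : List T) (i k : ℕ) (X : N) :
    prefixProb G w i k X = PreT G (substr w i k) X := by
  set s := substr w i k with hs
  rw [PreT, tsum_fiber_subtype (P := fun τ : DTree N T => τ.root = X ∧ s <+: τ.yield)
    (fun τ => τ.yield.drop s.length) (fun τ => treeProb G τ)]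
  rw [prefixProb]
  refine tsum_congr fun u => ?_
  refine (tsum_subtype_congr (fun τ => treeProb G τ) fun τ => ?_).symm
  constructor
  · rintro ⟨⟨h1, v, hv⟩, h3⟩
    refine ⟨h1, ?_⟩
    rw [← hv, List.drop_left] at h3
    rw [← h3, hv]
  · rintro ⟨h1, h2⟩
    exact ⟨⟨h1, u, h2.symm⟩, by rw [h2, List.drop_left]⟩

/-- the splitting lemma for prefixes of a concatenation -/
lemma split_iff {s yl yr : List T} {m : ℕ} (h1 : 1 ≤ m) (h2 : m < s.length) :
    (s <+: yl ++ yr ∧ yl.length = m) ↔ (yl = s.take m ∧ s.drop m <+: yr) := by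
  constructor
  · rintro ⟨hpre, hlen⟩
    have hyl : yl <+: s := List.prefix_of_prefix_length_le (List.prefix_append yl yr) hpre
      (by rw [hlen]; exact Nat.le_of_lt h2)
    have hyl' : yl = s.take m := by
      have := List.prefix_iff_eq_take.mp hyl
      rw [hlen] at this
      exact this
    refine ⟨hyl', ?_⟩
    obtain ⟨v, hv⟩ := hpre
    rw [show s = s.take m ++ s.drop m from (List.take_append_drop m s).symm, hyl'] at hv
    rw [List.append_assoc] at hv
    have := List.append_cancel_left hv
    exact ⟨v, this⟩
  · rintro ⟨hyl, v, hv⟩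
    constructor
    · refine ⟨v, ?_⟩
      rw [show s = s.take m ++ s.drop m from (List.take_append_drop m s).symm]
      rw [List.append_assoc, hv, hyl]
    · rw [hyl, List.length_take]
      omega

/-- stopping depth along the left spine -/
def sdp (b : ℕ) : DTree N T → ℕ
  | .leaf _ _ => 0
  | .node _ l r => if l.yield.length < b then 0 else sdp b l + 1

/-- the inner quantity: one rule at the stopping node, then the split -/
def Cfun (G : CNFPCFG N T) (s : List T) (X' : N) : ℝ≥0∞ :=
  ∑ Y : N, ∑ Z : N, G.pbin X' Y Z *
    ∑ m ∈ Finset.Ico 1 s.length, InT G (s.take m) Y * PreT G (s.drop m) Z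

/-- trees with prefix `s` and stopping depth `n` -/
def Sfun (G : CNFPCFG N T) (s : List T) (n : ℕ) (X : N) : ℝ≥0∞ :=
  ∑' τ : {τ : DTree N T // τ.root = X ∧ (s <+: τ.yield ∧ sdp s.length τ = n)},
    treeProb G τ.1

lemma Pre_partition (G : CNFPCFG N T) (s : List T) (X : N) :
    PreT G s X = ∑' n : ℕ, Sfun G s n X := by
  rw [PreT, tsum_fiber_subtype (P := fun τ : DTree N T => τ.root = X ∧ s <+: τ.yield)
    (sdp s.length) (fun τ => treeProb G τ)]
  refine tsum_congr fun n => ?_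
  exact tsum_subtype_congr (fun τ => treeProb G τ) fun τ => by tauto

lemma S_zero (G : CNFPCFG N T) (s : List T) (hs : 2 ≤ s.length) (X : N) :
    Sfun G s 0 X = Cfun G s X := by
  rw [Sfun, tsum_node G X _ (fun a h => by
    have := h.1.length_le
    simp [DTree.yield] at this
    omega)]
  refine Finset.sum_congr rfl fun Y _ => Finset.sum_congr rfl fun Z _ => ?_
  congr 1
  rw [tsum_fiber_subtype
    (P := fun lr : DTree N T × DTree N T => (lr.1.root = Y ∧ lr.2.root = Z) ∧
      (s <+: (DTree.node X lr.1 lr.2).yield ∧ sdp s.length (DTree.node X lr.1 lr.2) = 0))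
    (fun lr => lr.1.yield.length)
    (fun lr => treeProb G lr.1 * treeProb G lr.2)]
  rw [tsum_eq_sum (s := Finset.Ico 1 s.length) (fun m hm => by
    refine tsum_subtype_empty (fun lr : DTree N T × DTree N T =>
      treeProb G lr.1 * treeProb G lr.2) fun lr hlr => ?_
    obtain ⟨⟨_, ⟨_, hsd⟩⟩, hlen⟩ := hlr
    have hsd' : lr.1.yield.length < s.length := by
      by_contra hge
      rw [show sdp s.length (DTree.node X lr.1 lr.2)
        = if lr.1.yield.length < s.length then 0 else sdp s.length lr.1 + 1 from rfl] at hsd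
      rw [if_neg hge] at hsd
      omega
    have hpos : 0 < lr.1.yield.length := yield_len_pos lr.1
    exact hm (Finset.mem_Ico.mpr ⟨by omega, by omega⟩))]
  refine Finset.sum_congr rfl fun m hm => ?_
  obtain ⟨hm1, hm2⟩ := Finset.mem_Ico.mp hm
  have hiff : ∀ lr : DTree N T × DTree N T,
      (((lr.1.root = Y ∧ lr.2.root = Z) ∧
        (s <+: (DTree.node X lr.1 lr.2).yield ∧ sdp s.length (DTree.node X lr.1 lr.2) = 0)) ∧
        lr.1.yield.length = m)
      ↔ ((lr.1.root = Y ∧ lr.1.yield = s.take m) ∧ (lr.2.root = Z ∧ s.drop m <+: lr.2.yield)) := by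
    intro lr
    have hyield : (DTree.node X lr.1 lr.2).yield = lr.1.yield ++ lr.2.yield := rfl
    have hsdp : sdp s.length (DTree.node X lr.1 lr.2)
        = if lr.1.yield.length < s.length then 0 else sdp s.length lr.1 + 1 := rfl
    constructor
    · rintro ⟨⟨⟨hr1, hr2⟩, ⟨hpre, _⟩⟩, hlen⟩
      rw [hyield] at hpre
      obtain ⟨h3, h4⟩ := (split_iff hm1 hm2).mp ⟨hpre, hlen⟩
      exact ⟨⟨hr1, h3⟩, ⟨hr2, h4⟩⟩
    · rintro ⟨⟨hr1, h3⟩, ⟨hr2, h4⟩⟩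
      obtain ⟨hpre, hlen⟩ := (split_iff hm1 hm2).mpr ⟨h3, h4⟩
      refine ⟨⟨⟨hr1, hr2⟩, ⟨by rw [hyield]; exact hpre, ?_⟩⟩, hlen⟩
      rw [hsdp, if_pos (by omega)]
  rw [tsum_subtype_congr (fun lr : DTree N T × DTree N T =>
    treeProb G lr.1 * treeProb G lr.2) hiff]
  exact tsum_pair_prod (P := fun l : DTree N T => l.root = Y ∧ l.yield = s.take m)
    (Q := fun r : DTree N T => r.root = Z ∧ s.drop m <+: r.yield) (treeProb G) (treeProb G)

lemma S_succ (G : CNFPCFG N T) (hTight : Tight G) (hTrim : Trim G)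
    (s : List T) (n : ℕ) (X : N) :
    Sfun G s (n+1) X = ∑ Y : N, ∑ Z : N, G.pbin X Y Z * Sfun G s n Y := by
  rw [Sfun, tsum_node G X _ (fun a h => by
    have : sdp s.length (DTree.leaf X a : DTree N T) = 0 := rfl
    omega)]
  refine Finset.sum_congr rfl fun Y _ => Finset.sum_congr rfl fun Z _ => ?_
  have hiff : ∀ lr : DTree N T × DTree N T,
      ((lr.1.root = Y ∧ lr.2.root = Z) ∧
        (s <+: (DTree.node X lr.1 lr.2).yield ∧ sdp s.length (DTree.node X lr.1 lr.2) = n+1))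
      ↔ ((lr.1.root = Y ∧ (s <+: lr.1.yield ∧ sdp s.length lr.1 = n)) ∧
          (lr.2.root = Z ∧ True)) := by
    intro lr
    have hyield : (DTree.node X lr.1 lr.2).yield = lr.1.yield ++ lr.2.yield := rfl
    have hsdp : sdp s.length (DTree.node X lr.1 lr.2)
        = if lr.1.yield.length < s.length then 0 else sdp s.length lr.1 + 1 := rfl
    constructor
    · rintro ⟨⟨hr1, hr2⟩, ⟨hpre, hsd⟩⟩
      rw [hsdp] at hsd
      by_cases hlt : lr.1.yield.length < s.length
      · rw [if_pos hlt] at hsd; omega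
      · rw [if_neg hlt] at hsd
        rw [hyield] at hpre
        have hpre1 : s <+: lr.1.yield :=
          List.prefix_of_prefix_length_le hpre (List.prefix_append _ _) (by omega)
        exact ⟨⟨hr1, hpre1, by omega⟩, hr2, trivial⟩
    · rintro ⟨⟨hr1, hpre1, hsd1⟩, hr2, -⟩
      have hlen : s.length ≤ lr.1.yield.length := hpre1.length_le
      refine ⟨⟨hr1, hr2⟩, ⟨by rw [hyield]; exact hpre1.trans (List.prefix_append _ _), ?_⟩⟩
      rw [hsdp, if_neg (by omega), hsd1]
  rw [tsum_subtype_congr (fun lr : DTree N T × DTree N T =>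
    treeProb G lr.1 * treeProb G lr.2) hiff]
  rw [tsum_pair_prod (P := fun l : DTree N T => l.root = Y ∧ (s <+: l.yield ∧ sdp s.length l = n))
    (Q := fun r : DTree N T => r.root = Z ∧ True) (treeProb G) (treeProb G)]
  have hZ : (∑' r : {r : DTree N T // r.root = Z ∧ True}, treeProb G r.1) = ZT G Z := by
    rw [ZT]
    exact tsum_subtype_congr (fun r => treeProb G r) (by tauto)
  rw [hZ, ← Sfun, ← mul_assoc]
  exact pbin_mul_ZT G hTight hTrim X Y Z (Sfun G s n Y)

/-- spine sums of length `n` -/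
def SP (G : CNFPCFG N T) (C : N → ℝ≥0∞) (n : ℕ) (X : N) : ℝ≥0∞ :=
  ∑' c : {c : List (N × N) // c.length = n}, spineProb G X c.1 * C (spineEnd X c.1)

lemma SP_zero (G : CNFPCFG N T) (C : N → ℝ≥0∞) (X : N) : SP G C 0 X = C X := by
  rw [SP, tsum_eq_single (⟨[], rfl⟩ : {c : List (N × N) // c.length = 0})
    (fun c hc => absurd (Subtype.ext (List.length_eq_zero_iff.mp c.2)) hc)]
  show spineProb G X [] * C (spineEnd X []) = C X
  rw [show spineProb G X [] = 1 from rfl, one_mul]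
  rfl

def consEquiv (n : ℕ) : {c : List (N × N) // c.length = n + 1} ≃
    ((N × N) × {c : List (N × N) // c.length = n}) where
  toFun x :=
    match x with
    | ⟨[], h⟩ => absurd h (by simp)
    | ⟨p :: rest, h⟩ => (p, ⟨rest, by simpa using h⟩)
  invFun y := ⟨y.1 :: y.2.1, by simp [y.2.2]⟩
  left_inv := by rintro ⟨c, hc⟩; cases c with
    | nil => simp at hc
    | cons p rest => rfl
  right_inv := by rintro ⟨p, ⟨c, hc⟩⟩; rfl

lemma SP_succ (G : CNFPCFG N T) (C : N → ℝ≥0∞) (n : ℕ) (X : N) :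
    SP G C (n+1) X = ∑ Y : N, ∑ Z : N, G.pbin X Y Z * SP G C n Y := by
  rw [SP, ← Equiv.tsum_eq (consEquiv (N := N) n).symm
    (fun c => spineProb G X c.1 * C (spineEnd X c.1))]
  rw [ENNReal.tsum_prod', tsum_fintype]
  rw [Fintype.sum_prod_type]
  refine Finset.sum_congr rfl fun Y _ => Finset.sum_congr rfl fun Z _ => ?_
  have : ∀ c : {c : List (N × N) // c.length = n},
      spineProb G X (((consEquiv (N := N) n).symm ((Y, Z), c)).1)
        * C (spineEnd X (((consEquiv (N := N) n).symm ((Y, Z), c)).1))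
      = G.pbin X Y Z * (spineProb G Y c.1 * C (spineEnd Y c.1)) := by
    intro c
    show spineProb G X ((Y, Z) :: c.1) * C (spineEnd X ((Y, Z) :: c.1)) = _
    rw [show spineProb G X ((Y, Z) :: c.1) = G.pbin X Y Z * spineProb G Y c.1 from rfl,
      show spineEnd X ((Y, Z) :: c.1) = spineEnd Y c.1 from rfl, mul_assoc]
  rw [tsum_congr this]
  exact ENNReal.tsum_mul_left

lemma Sfun_eq_SP (G : CNFPCFG N T) (hTight : Tight G) (hTrim : Trim G)
    (s : List T) (hs : 2 ≤ s.length) :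
    ∀ n X, Sfun G s n X = SP G (Cfun G s) n X := by
  intro n
  induction n with
  | zero => intro X; rw [S_zero G s hs X, SP_zero]
  | succ n ih =>
    intro X
    rw [S_succ G hTight hTrim s n X, SP_succ]
    exact Finset.sum_congr rfl fun Y _ => Finset.sum_congr rfl fun Z _ => by rw [ih Y]

lemma spine_to_Elc (G : CNFPCFG N T) (C : N → ℝ≥0∞) (X : N) :
    (∑' c : List (N × N), spineProb G X c * C (spineEnd X c))
      = ∑ X' : N, Elc G X X' * C X' := by
  rw [tsum_fiber (spineEnd X) (fun c => spineProb G X c * C (spineEnd X c))]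
  rw [tsum_fintype]
  refine Finset.sum_congr rfl fun X' _ => ?_
  rw [Elc]
  rw [← ENNReal.tsum_mul_right]
  refine tsum_congr fun c => ?_
  rw [c.2]

lemma Pre_main (G : CNFPCFG N T) (hTight : Tight G) (hTrim : Trim G)
    (s : List T) (hs : 2 ≤ s.length) (X : N) :
    PreT G s X = ∑ X' : N, Elc G X X' * Cfun G s X' := by
  rw [Pre_partition G s X]
  rw [tsum_congr (fun n => Sfun_eq_SP G hTight hTrim s hs n X)]
  rw [← spine_to_Elc G (Cfun G s) X]
  rw [tsum_fiber (fun c : List (N × N) => c.length)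
    (fun c => spineProb G X c * Cfun G s (spineEnd X c))]
  exact tsum_congr fun n => rfl

end Main

end PFXaux

/-- Lemma 1 of the paper.  For a tight, trim PCFG in CNF and a string
`w = w₁ ⋯ w_N`, the prefix probability satisfies, for all `X ∈ N` and `1 ≤ i < k ≤ N`,
`p_π(i, k ∣ X) = ∑_{Y,Z} E_lc(Y Z ∣ X) · ∑_{j=i}^{k-1} β(i, j ∣ Y) · p_π(j+1, k ∣ Z)`. -/
theorem prefixProb_recursion (G : CNFPCFG N T) (hTight : Tight G) (hTrim : Trim G)
    (w : List T) (X : N) (i k : ℕ) (h1 : 1 ≤ i) (hik : i < k) (hk : k ≤ w.length) :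
    prefixProb G w i k X
      = ∑ Y : N, ∑ Z : N, ElcBin G X Y Z *
          ∑ j ∈ Finset.Ico i k, inside G w i j Y * prefixProb G w (j + 1) k Z := by
  classical
  have hslen : (substr w i k).length = k - i + 1 := by
    simp only [substr, List.length_drop, List.length_take]
    omega
  have hs2 : 2 ≤ (substr w i k).length := by omega
  rw [PFXaux.prefixProb_eq_PreT, PFXaux.Pre_main G hTight hTrim (substr w i k) hs2 X]
  have halg : ∑ X' : N, Elc G X X' * PFXaux.Cfun G (substr w i k) X'
      = ∑ Y : N, ∑ Z : N, (∑ X' : N, Elc G X X' * G.pbin X' Y Z) *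
          ∑ m ∈ Finset.Ico 1 (substr w i k).length,
            PFXaux.InT G ((substr w i k).take m) Y * PFXaux.PreT G ((substr w i k).drop m) Z := by
    simp only [PFXaux.Cfun, Finset.mul_sum]
    rw [Finset.sum_comm]
    refine Finset.sum_congr rfl fun Y _ => ?_
    rw [Finset.sum_comm]
    refine Finset.sum_congr rfl fun Z _ => ?_
    rw [Finset.sum_comm]
    refine Finset.sum_congr rfl fun m _ => ?_
    rw [Finset.sum_mul]
    exact Finset.sum_congr rfl fun X' _ => (mul_assoc _ _ _).symm
  rw [halg]
  refine Finset.sum_congr rfl fun Y _ => Finset.sum_congr rfl fun Z _ => ?_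
  congr 1
  refine Finset.sum_nbij' (fun m => m + i - 1) (fun j => j - i + 1) ?_ ?_ ?_ ?_ ?_
  · intro m hm
    obtain ⟨hm1, hm2⟩ := Finset.mem_Ico.mp hm
    rw [hslen] at hm2
    exact Finset.mem_Ico.mpr ⟨by omega, by omega⟩
  · intro j hj
    obtain ⟨hj1, hj2⟩ := Finset.mem_Ico.mp hj
    rw [Finset.mem_Ico, hslen]
    omega
  · intro m hm
    obtain ⟨hm1, _⟩ := Finset.mem_Ico.mp hm
    omega
  · intro j hj
    obtain ⟨hj1, _⟩ := Finset.mem_Ico.mp hj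
    omega
  · intro m hm
    obtain ⟨hm1, hm2⟩ := Finset.mem_Ico.mp hm
    rw [hslen] at hm2
    have ht1 : (substr w i k).take m = substr w i (m + i - 1) := by
      rw [substr, substr, List.take_drop, List.take_take]
      have h' : min (i - 1 + m) k = m + i - 1 := by omega
      rw [h']
    have ht2 : (substr w i k).drop m = substr w (m + i - 1 + 1) k := by
      rw [substr, substr, List.drop_drop]
      have h' : i - 1 + m = m + i - 1 + 1 - 1 := by omega
      rw [h']
    rw [ht1, ht2, PFXaux.prefixProb_eq_PreT]
    rfl
end
end

section
/- Let G = (N, Σ, S, R, p) be a tight, trim probabilistic context-free grammar in Chomsky normal form with non-terminals X₁, …, X_n, and let P be the n × n matrix with P_{ij} = ∑_{Y ∈ N} p(X_i → X_j Y). Then the series ∑_{k=0}^∞ P^k converges entrywise, and its (i, j) entry equals the left-corner expectation E_lc(X_j | X_i); consequently the matrix of left-corner expectations equals (I − P)^{-1}. -/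
open scoped ENNReal

variable {N T : Type} [Fintype N] [Fintype T] [DecidableEq N]

/-! ### Auxiliary development -/

namespace DTree
def height {N T : Type} : DTree N T → ℕ
  | leaf _ _ => 1
  | node _ l r => max l.height r.height + 1
def isLeaf {N T : Type} : DTree N T → Bool
  | leaf _ _ => true
  | node _ _ _ => false
lemma height_pos {N T : Type} (τ : DTree N T) : 1 ≤ τ.height := by
  cases τ <;> simp [height]
end DTree

section Aux
variable {N T : Type} [Fintype N] [Fintype T] [DecidableEq N]

lemma tsum_split_leaf_node (f : DTree N T → ℝ≥0∞) :
    ∑' τ, f τ = (∑' p : N × T, f (.leaf p.1 p.2))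
      + ∑' q : N × DTree N T × DTree N T, f (.node q.1 q.2.1 q.2.2) := by
  have h1 : ∀ τ, f τ = (if τ.isLeaf then f τ else 0) + (if τ.isLeaf then 0 else f τ) := by
    intro τ; by_cases h : τ.isLeaf <;> simp [h]
  rw [tsum_congr h1, ENNReal.tsum_add]
  congr 1
  · refine (Function.Injective.tsum_eq (g := fun p : N × T => DTree.leaf p.1 p.2) ?_ ?_).symm.trans ?_
    · rintro ⟨a, b⟩ ⟨c, d⟩ h; simpa using h
    · intro τ hτ
      cases τ with
      | leaf X a => exact ⟨(X, a), rfl⟩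
      | node X l r => simp [DTree.isLeaf] at hτ
    · exact tsum_congr fun p => by simp [DTree.isLeaf]
  · refine (Function.Injective.tsum_eq
      (g := fun q : N × DTree N T × DTree N T => DTree.node q.1 q.2.1 q.2.2) ?_ ?_).symm.trans ?_
    · rintro ⟨a, b, c⟩ ⟨d, e, g⟩ h; simpa [Prod.ext_iff] using h
    · intro τ hτ
      cases τ with
      | leaf X a => simp [DTree.isLeaf] at hτ
      | node X l r => exact ⟨(X, l, r), rfl⟩
    · exact tsum_congr fun p => by simp [DTree.isLeaf]

lemma tsum_group {α : Type} (ρ : α → N) (g : N → ℝ≥0∞) (h : α → ℝ≥0∞) :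
    ∑' x, g (ρ x) * h x = ∑ B : N, g B * ∑' x, if ρ x = B then h x else 0 := by
  have h1 : ∀ x, g (ρ x) * h x = ∑ B : N, if ρ x = B then g B * h x else 0 := by
    intro x; rw [Finset.sum_ite_eq Finset.univ (ρ x) (fun B => g B * h x)]; simp
  rw [tsum_congr h1]
  rw [tsum_congr (fun x => (tsum_fintype (L := SummationFilter.unconditional N) _).symm), ENNReal.tsum_comm, tsum_fintype]
  refine Finset.sum_congr rfl fun B _ => ?_
  rw [← ENNReal.tsum_mul_left]
  exact tsum_congr fun x => by by_cases hx : ρ x = B <;> simp [hx]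

lemma tsum_split_list (f : List (N × N) → ℝ≥0∞) :
    ∑' c, f c = f [] + ∑' q : (N × N) × List (N × N), f (q.1 :: q.2) := by
  have h1 : ∀ c, f c = (if c = [] then f c else 0) + (if c = [] then 0 else f c) := by
    intro c; by_cases h : c = [] <;> simp [h]
  rw [tsum_congr h1, ENNReal.tsum_add]
  congr 1
  · rw [tsum_eq_single ([] : List (N × N)) (fun c hc => by simp [hc])]; simp
  · refine (Function.Injective.tsum_eq (g := fun q : (N × N) × List (N × N) => q.1 :: q.2) ?_ ?_).symm.trans ?_
    · rintro ⟨a, b⟩ ⟨c, d⟩ h; simpa [Prod.ext_iff] using h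
    · intro c hc
      cases c with
      | nil => simp at hc
      | cons p rest => exact ⟨(p, rest), rfl⟩
    · exact tsum_congr fun q => by simp

lemma tree_master (G : CNFPCFG N T) (u v : DTree N T → Prop) [DecidablePred u] [DecidablePred v]
    (hleaf : ∀ (Y : N) (a : T), u (.leaf Y a))
    (hnode : ∀ (Y : N) (l r : DTree N T), u (.node Y l r) ↔ v l ∧ v r) (X : N) :
    (∑' τ : DTree N T, if τ.root = X ∧ u τ then treeProb G τ else 0)
      = (∑ a, G.pterm X a) + ∑ A, ∑ B, G.pbin X A B
          * (∑' τ : DTree N T, if τ.root = A ∧ v τ then treeProb G τ else 0)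
          * (∑' τ : DTree N T, if τ.root = B ∧ v τ then treeProb G τ else 0) := by
  set V : N → ℝ≥0∞ := fun A => ∑' τ : DTree N T, if τ.root = A ∧ v τ then treeProb G τ else 0 with hV
  rw [tsum_split_leaf_node]
  congr 1
  · calc ∑' p : N × T, (if (DTree.leaf p.1 p.2).root = X ∧ u (DTree.leaf p.1 p.2)
          then treeProb G (DTree.leaf p.1 p.2) else 0)
        = ∑ p : N × T, (if p.1 = X then G.pterm p.1 p.2 else 0) := by
          rw [tsum_fintype]
          exact Finset.sum_congr rfl fun p _ => by simp [DTree.root, treeProb, hleaf]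
      _ = ∑ Y, ∑ a, (if Y = X then G.pterm Y a else 0) := Fintype.sum_prod_type _
      _ = ∑ a, G.pterm X a := by
          refine (Finset.sum_eq_single X (fun Y _ hY => by simp [hY]) (by simp)).trans (by simp)
  · have hsummand : ∀ q : N × DTree N T × DTree N T,
        (if (DTree.node q.1 q.2.1 q.2.2).root = X ∧ u (DTree.node q.1 q.2.1 q.2.2)
          then treeProb G (DTree.node q.1 q.2.1 q.2.2) else 0)
        = if q.1 = X ∧ (v q.2.1 ∧ v q.2.2) then
            G.pbin q.1 q.2.1.root q.2.2.root * treeProb G q.2.1 * treeProb G q.2.2 else 0 := by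
      intro q; simp [DTree.root, treeProb, hnode]
    rw [tsum_congr hsummand, ENNReal.tsum_prod']
    have houter : ∀ Y : N, (∑' lr : DTree N T × DTree N T,
        if Y = X ∧ (v lr.1 ∧ v lr.2) then
          G.pbin Y lr.1.root lr.2.root * treeProb G lr.1 * treeProb G lr.2 else 0)
        = if Y = X then (∑' lr : DTree N T × DTree N T,
            if v lr.1 ∧ v lr.2 then
              G.pbin X lr.1.root lr.2.root * treeProb G lr.1 * treeProb G lr.2 else 0) else 0 := by
      intro Y
      by_cases hY : Y = X
      · subst hY; simp
      · simp [hY]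
    rw [tsum_congr houter, tsum_fintype,
      Finset.sum_eq_single X (fun Y _ hY => by simp [hY]) (by simp), if_pos rfl,
      ENNReal.tsum_prod']
    have hin : ∀ l : DTree N T,
        (∑' r : DTree N T, if v l ∧ v r then
            G.pbin X l.root r.root * treeProb G l * treeProb G r else 0)
        = (∑ B, G.pbin X l.root B * V B) * (if v l then treeProb G l else 0) := by
      intro l
      calc (∑' r : DTree N T, if v l ∧ v r then
              G.pbin X l.root r.root * treeProb G l * treeProb G r else 0)
          = ∑' r : DTree N T,
              (fun B => if v l then G.pbin X l.root B * treeProb G l else 0) r.root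
                * (if v r then treeProb G r else 0) := by
            refine tsum_congr fun r => ?_
            by_cases h1 : v l <;> by_cases h2 : v r <;> simp [h1, h2]
        _ = ∑ B, (if v l then G.pbin X l.root B * treeProb G l else 0)
              * ∑' r : DTree N T, if r.root = B then (if v r then treeProb G r else 0) else 0 := by
            exact tsum_group DTree.root (fun B => if v l then G.pbin X l.root B * treeProb G l else 0)
              (fun r => if v r then treeProb G r else 0)
        _ = ∑ B, (if v l then G.pbin X l.root B * treeProb G l else 0) * V B := by
            refine Finset.sum_congr rfl fun B _ => ?_
            congr 1
            exact tsum_congr fun r => by by_cases h1 : r.root = B <;> by_cases h2 : v r <;>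
              simp [h1, h2]
        _ = (∑ B, G.pbin X l.root B * V B) * (if v l then treeProb G l else 0) := by
            by_cases h1 : v l
            · simp only [h1, if_true, Finset.sum_mul]
              exact Finset.sum_congr rfl fun B _ => by ring
            · simp [h1]
    rw [tsum_congr hin]
    rw [tsum_group DTree.root (fun A => ∑ B, G.pbin X A B * V B)
      (fun l => if v l then treeProb G l else 0)]
    refine Finset.sum_congr rfl fun A _ => ?_
    have : (∑' l : DTree N T, if l.root = A then (if v l then treeProb G l else 0) else 0) = V A :=
      tsum_congr fun l => by by_cases h1 : l.root = A <;> by_cases h2 : v l <;> simp [h1, h2]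
    rw [this, Finset.sum_mul]
    exact Finset.sum_congr rfl fun B _ => by ring

end Aux

section Aux2
variable {N T : Type} [Fintype N] [Fintype T] [DecidableEq N]

/-- Total mass of derivation trees rooted at `X`, as an indicator tsum. -/
noncomputable def tmass (G : CNFPCFG N T) (X : N) : ℝ≥0∞ :=
  ∑' τ : DTree N T, if τ.root = X then treeProb G τ else 0

/-- Mass of derivation trees rooted at `X` of height at most `n`. -/
noncomputable def tmassH (G : CNFPCFG N T) (n : ℕ) (X : N) : ℝ≥0∞ :=
  ∑' τ : DTree N T, if τ.root = X ∧ τ.height ≤ n then treeProb G τ else 0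

lemma tmass_eq_subtype_tsum (G : CNFPCFG N T) (X : N) :
    (∑' τ : {τ : DTree N T // τ.root = X}, treeProb G τ.1) = tmass G X := by
  rw [tmass, show (fun τ : DTree N T => if τ.root = X then treeProb G τ else 0)
      = {τ : DTree N T | τ.root = X}.indicator (treeProb G) from
    funext fun τ => by simp [Set.indicator_apply]]
  exact tsum_subtype {τ : DTree N T | τ.root = X} (treeProb G)

lemma tmass_rec (G : CNFPCFG N T) (X : N) :
    tmass G X = (∑ a, G.pterm X a) + ∑ A, ∑ B, G.pbin X A B * tmass G A * tmass G B := by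
  have h := tree_master G (fun _ => True) (fun _ => True) (fun _ _ => trivial)
    (fun _ _ _ => by simp) X
  simpa [tmass] using h

lemma tmassH_zero (G : CNFPCFG N T) (X : N) : tmassH G 0 X = 0 := by
  rw [tmassH]
  convert tsum_zero with τ
  have := τ.height_pos
  have : ¬ (τ.root = X ∧ τ.height ≤ 0) := by rintro ⟨-, h⟩; omega
  rw [if_neg this]

lemma tmassH_rec (G : CNFPCFG N T) (n : ℕ) (X : N) :
    tmassH G (n + 1) X
      = (∑ a, G.pterm X a) + ∑ A, ∑ B, G.pbin X A B * tmassH G n A * tmassH G n B := by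
  have h := tree_master G (fun τ => τ.height ≤ n + 1) (fun τ => τ.height ≤ n)
    (fun Y a => by simp [DTree.height])
    (fun Y l r => by simp [DTree.height]) X
  simpa [tmassH] using h

lemma norm_le_one (G : CNFPCFG N T) (X : N) :
    (∑ A, ∑ B, G.pbin X A B) + (∑ a, G.pterm X a) ≤ 1 := by
  by_cases h : (∃ Y Z, G.pbin X Y Z ≠ 0) ∨ (∃ a, G.pterm X a ≠ 0) ∨ (X = G.S ∧ G.peps ≠ 0)
  · have := G.locally_normalized X h
    calc (∑ A, ∑ B, G.pbin X A B) + (∑ a, G.pterm X a)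
        ≤ (∑ A, ∑ B, G.pbin X A B) + (∑ a, G.pterm X a)
          + (if X = G.S then G.peps else 0) := le_self_add
      _ = 1 := this
  · push_neg at h
    obtain ⟨h1, h2, -⟩ := h
    have e1 : (∑ A, ∑ B, G.pbin X A B) = 0 := by
      refine Finset.sum_eq_zero fun A _ => Finset.sum_eq_zero fun B _ => ?_
      simpa using h1 A B
    have e2 : (∑ a, G.pterm X a) = 0 := Finset.sum_eq_zero fun a _ => by simpa using h2 a
    simp [e1, e2]

lemma tmassH_le_one (G : CNFPCFG N T) : ∀ n X, tmassH G n X ≤ 1 := by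
  intro n
  induction n with
  | zero => intro X; simp [tmassH_zero]
  | succ n ih =>
    intro X
    rw [tmassH_rec]
    calc (∑ a, G.pterm X a) + ∑ A, ∑ B, G.pbin X A B * tmassH G n A * tmassH G n B
        ≤ (∑ a, G.pterm X a) + ∑ A, ∑ B, G.pbin X A B * 1 * 1 := by
          gcongr <;> exact ih _
      _ = (∑ A, ∑ B, G.pbin X A B) + (∑ a, G.pterm X a) := by rw [add_comm]; simp
      _ ≤ 1 := norm_le_one G X

lemma tmassH_le_tmass (G : CNFPCFG N T) (n : ℕ) (X : N) : tmassH G n X ≤ tmass G X := by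
  refine ENNReal.tsum_le_tsum fun τ => ?_
  by_cases h : τ.root = X ∧ τ.height ≤ n
  · simp [h, h.1]
  · simp [h]

lemma tmass_le_iSup_tmassH (G : CNFPCFG N T) (X : N) : tmass G X ≤ ⨆ n, tmassH G n X := by
  rw [tmass, ENNReal.tsum_eq_iSup_sum]
  refine iSup_le fun F => ?_
  refine le_trans ?_ (le_iSup _ (F.sup DTree.height))
  rw [tmassH]
  refine le_trans (Finset.sum_le_sum (fun τ hτ => ?_)) (ENNReal.sum_le_tsum F)
  by_cases h : τ.root = X
  · have : τ.height ≤ F.sup DTree.height := Finset.le_sup hτ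
    simp [h, this]
  · simp [h]

lemma tmass_le_one (G : CNFPCFG N T) (X : N) : tmass G X ≤ 1 :=
  (tmass_le_iSup_tmassH G X).trans (iSup_le fun n => tmassH_le_one G n X)

lemma tmass_ne_top (G : CNFPCFG N T) (X : N) : tmass G X ≠ ∞ :=
  fun h => by simpa [h] using tmass_le_one G X

end Aux2

section Aux3
variable {N T : Type} [Fintype N] [Fintype T] [DecidableEq N]

lemma pbinsum_ne_top (G : CNFPCFG N T) (X : N) : (∑ A, ∑ B, G.pbin X A B) ≠ ∞ := by
  intro h
  have := norm_le_one G X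
  rw [h] at this
  simp at this

lemma step_child_one (G : CNFPCFG N T) {X : N}
    (hX : tmass G X + (if X = G.S then G.peps else 0) = 1)
    {Y Z : N} (hne : G.pbin X Y Z ≠ 0) : tmass G Y = 1 ∧ tmass G Z = 1 := by
  have hnorm := G.locally_normalized X (Or.inl ⟨Y, Z, hne⟩)
  have hrec := tmass_rec G X
  -- 1 = (∑ a pterm) + ∑∑ pbin*t*t + ite   and   1 = ∑∑pbin + ∑ pterm + ite
  have h1 : (∑ a, G.pterm X a) + (∑ A, ∑ B, G.pbin X A B * tmass G A * tmass G B)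
      + (if X = G.S then G.peps else 0) = 1 := by
    rw [← hrec]; exact hX
  have h2 : (∑ a, G.pterm X a) + (∑ A, ∑ B, G.pbin X A B)
      + (if X = G.S then G.peps else 0) = 1 := by
    rw [show (∑ a, G.pterm X a) + (∑ A, ∑ B, G.pbin X A B) = (∑ A, ∑ B, G.pbin X A B)
      + (∑ a, G.pterm X a) from add_comm _ _]
    exact hnorm
  -- cancel to get equality of the двух binary sums
  have hterm_ne : (∑ a, G.pterm X a) ≠ ∞ := by
    intro h
    have := norm_le_one G X
    rw [h] at this
    simp at this
  have hite_ne : (if X = G.S then G.peps else 0) ≠ ∞ := by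
    intro h
    rw [h] at h2
    simp [add_top] at h2
  have hkey : (∑ A, ∑ B, G.pbin X A B * tmass G A * tmass G B) = ∑ A, ∑ B, G.pbin X A B := by
    have := h1.trans h2.symm
    rw [add_assoc, add_assoc] at this
    rw [ENNReal.add_right_inj hterm_ne] at this
    exact (ENNReal.add_left_inj hite_ne).mp this
  -- rewrite as sums over pairs
  have hkey' : (∑ p : N × N, G.pbin X p.1 p.2 * tmass G p.1 * tmass G p.2)
      = ∑ p : N × N, G.pbin X p.1 p.2 := by
    rw [Fintype.sum_prod_type, Fintype.sum_prod_type]; exact hkey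
  have hle : ∀ p : N × N, G.pbin X p.1 p.2 * tmass G p.1 * tmass G p.2 ≤ G.pbin X p.1 p.2 := by
    intro p
    calc G.pbin X p.1 p.2 * tmass G p.1 * tmass G p.2
        ≤ G.pbin X p.1 p.2 * 1 * 1 := by gcongr <;> exact tmass_le_one G _
      _ = G.pbin X p.1 p.2 := by ring
  have hsum_ne : (∑ p : N × N, G.pbin X p.1 p.2) ≠ ∞ := by
    rw [Fintype.sum_prod_type]; exact pbinsum_ne_top G X
  have hYZ : G.pbin X Y Z * tmass G Y * tmass G Z = G.pbin X Y Z := by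
    set f : N × N → ℝ≥0∞ := fun p => G.pbin X p.1 p.2 * tmass G p.1 * tmass G p.2 with hf
    set g : N × N → ℝ≥0∞ := fun p => G.pbin X p.1 p.2 with hg
    have hE : (∑ p ∈ Finset.univ.erase (Y, Z), g p) ≠ ∞ := by
      intro h
      apply hsum_ne
      refine eq_top_iff.2 ?_
      rw [← h]
      exact Finset.sum_le_sum_of_subset (Finset.erase_subset _ _)
    have hsf : f (Y, Z) + ∑ p ∈ Finset.univ.erase (Y, Z), f p = ∑ p : N × N, f p :=
      Finset.add_sum_erase _ f (Finset.mem_univ _)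
    have hsg : g (Y, Z) + ∑ p ∈ Finset.univ.erase (Y, Z), g p = ∑ p : N × N, g p :=
      Finset.add_sum_erase _ g (Finset.mem_univ _)
    have hchain : g (Y, Z) + ∑ p ∈ Finset.univ.erase (Y, Z), g p
        ≤ f (Y, Z) + ∑ p ∈ Finset.univ.erase (Y, Z), g p := by
      rw [hsg, ← hkey', ← hsf]
      gcongr with p hp
      exact hle p
    have : g (Y, Z) ≤ f (Y, Z) := by
      rw [add_comm (g (Y,Z)), add_comm (f (Y,Z))] at hchain
      exact (ENNReal.add_le_add_iff_left hE).mp hchain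
    exact le_antisymm (hle (Y, Z)) this
  -- from pbin * tY * tZ = pbin ≠ 0, ∞  conclude tY = tZ = 1
  have hfin : G.pbin X Y Z ≠ ∞ := by
    intro h
    apply pbinsum_ne_top G X
    refine eq_top_iff.2 ?_
    calc (⊤ : ℝ≥0∞) = G.pbin X Y Z := h.symm
      _ ≤ ∑ B, G.pbin X Y B := Finset.single_le_sum (fun _ _ => zero_le) (Finset.mem_univ Z)
      _ ≤ ∑ A, ∑ B, G.pbin X A B :=
          Finset.single_le_sum (f := fun A => ∑ B, G.pbin X A B)
            (fun _ _ => zero_le) (Finset.mem_univ Y)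
  have htt : tmass G Y * tmass G Z = 1 := by
    have h := hYZ
    rw [mul_assoc] at h
    nth_rewrite 2 [← mul_one (G.pbin X Y Z)] at h
    exact (ENNReal.mul_right_inj hne hfin).mp h
  constructor
  · have : (1 : ℝ≥0∞) ≤ tmass G Y := by
      calc (1:ℝ≥0∞) = tmass G Y * tmass G Z := htt.symm
        _ ≤ tmass G Y * 1 := by gcongr; exact tmass_le_one G _
        _ = tmass G Y := mul_one _
    exact le_antisymm (tmass_le_one G Y) this
  · have : (1 : ℝ≥0∞) ≤ tmass G Z := by
      calc (1:ℝ≥0∞) = tmass G Y * tmass G Z := htt.symm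
        _ ≤ 1 * tmass G Z := by gcongr; exact tmass_le_one G _
        _ = tmass G Z := one_mul _
    exact le_antisymm (tmass_le_one G Z) this

end Aux3

section Aux4
variable {N T : Type} [Fintype N] [Fintype T] [DecidableEq N]

lemma T_le_one (G : CNFPCFG N T) (X : N) :
    tmass G X + (if X = G.S then G.peps else 0) ≤ 1 := by
  by_cases h : (∃ Y Z, G.pbin X Y Z ≠ 0) ∨ (∃ a, G.pterm X a ≠ 0) ∨ (X = G.S ∧ G.peps ≠ 0)
  · have hnorm := G.locally_normalized X h
    calc tmass G X + (if X = G.S then G.peps else 0)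
        ≤ ((∑ a, G.pterm X a) + ∑ A, ∑ B, G.pbin X A B) + (if X = G.S then G.peps else 0) := by
          gcongr
          rw [tmass_rec]
          gcongr with A _ B _
          calc G.pbin X A B * tmass G A * tmass G B ≤ G.pbin X A B * 1 * 1 := by
                gcongr <;> exact tmass_le_one G _
            _ = G.pbin X A B := by ring
      _ = 1 := by rw [add_comm (∑ a, G.pterm X a)]; exact hnorm
  · push_neg at h
    obtain ⟨h1, h2, h3⟩ := h
    have e1 : (∑ A, ∑ B, G.pbin X A B * tmass G A * tmass G B) = 0 := by
      refine Finset.sum_eq_zero fun A _ => Finset.sum_eq_zero fun B _ => ?_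
      simp [h1 A B]
    have e2 : (∑ a, G.pterm X a) = 0 := Finset.sum_eq_zero fun a _ => by simpa using h2 a
    have e3 : tmass G X = 0 := by rw [tmass_rec, e1, e2]; simp
    rw [e3, zero_add]
    by_cases hX : X = G.S
    · rw [if_pos hX, h3 hX]; exact zero_le_one
    · simp [hX]

lemma reach_T (G : CNFPCFG N T) (hTight : Tight G) :
    ∀ X, Reach G X → tmass G X + (if X = G.S then G.peps else 0) = 1 := by
  have key : ∀ {Y : N}, tmass G Y = 1 → tmass G Y + (if Y = G.S then G.peps else 0) = 1 := by
    intro Y h1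
    by_cases hY : Y = G.S
    · have h2 := T_le_one G Y
      rw [h1, if_pos hY] at h2
      have h3 : (1:ℝ≥0∞) + G.peps ≤ 1 + 0 := by simpa using h2
      have hz : G.peps = 0 :=
        le_antisymm ((ENNReal.add_le_add_iff_left ENNReal.one_ne_top).mp h3) zero_le
      rw [h1, if_pos hY, hz]; simp
    · rw [h1, if_neg hY]; simp
  intro X hX
  induction hX with
  | start =>
    rw [if_pos rfl, ← tmass_eq_subtype_tsum, add_comm]
    exact hTight
  | @left X Y Z hR hne ih => exact key (step_child_one G ih hne).1
  | @right X Y Z hR hne ih => exact key (step_child_one G ih hne).2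

lemma child_one (G : CNFPCFG N T) (hTight : Tight G) (hTrim : Trim G) :
    ∀ X Y Z : N, G.pbin X Y Z ≠ 0 → tmass G Y = 1 ∧ tmass G Z = 1 :=
  fun X _ _ h => step_child_one G (reach_T G hTight X (hTrim X)) h

end Aux4

section Aux5
variable {N T : Type} [Fintype N] [Fintype T] [DecidableEq N]

/-- The left-corner transition matrix over `ℝ≥0∞`. -/
noncomputable def Qm (G : CNFPCFG N T) : Matrix N N ℝ≥0∞ :=
  Matrix.of fun X A => ∑ B, G.pbin X A B

lemma Qm_apply (G : CNFPCFG N T) (X A : N) : Qm G X A = ∑ B, G.pbin X A B := rfl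

/-- Simplified recursion for tree mass in a tight trim grammar. -/
lemma tmass_rec' (G : CNFPCFG N T) (hTight : Tight G) (hTrim : Trim G) (X : N) :
    tmass G X = (∑ a, G.pterm X a) + ∑ A, Qm G X A * tmass G A := by
  rw [tmass_rec]
  congr 1
  refine Finset.sum_congr rfl fun A _ => ?_
  rw [Qm_apply, Finset.sum_mul]
  refine Finset.sum_congr rfl fun B _ => ?_
  by_cases h : G.pbin X A B = 0
  · simp [h]
  · rw [(child_one G hTight hTrim X A B h).2, mul_one]

/-- Mass of derivation trees with left spine shorter than `k`. -/
noncomputable def fseq (G : CNFPCFG N T) : ℕ → N → ℝ≥0∞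
  | 0 => fun _ => 0
  | (k+1) => fun X => (∑ a, G.pterm X a) + ∑ A, Qm G X A * fseq G k A

lemma fseq_zero (G : CNFPCFG N T) (X : N) : fseq G 0 X = 0 := rfl

lemma fseq_succ (G : CNFPCFG N T) (k : ℕ) (X : N) :
    fseq G (k + 1) X = (∑ a, G.pterm X a) + ∑ A, Qm G X A * fseq G k A := rfl

lemma fseq_le_tmass (G : CNFPCFG N T) (hTight : Tight G) (hTrim : Trim G) :
    ∀ k X, fseq G k X ≤ tmass G X := by
  intro k
  induction k with
  | zero => intro X; simp [fseq_zero]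
  | succ k ih =>
    intro X
    rw [fseq_succ, tmass_rec' G hTight hTrim]
    gcongr with A _
    exact ih A

lemma tmassH_le_fseq (G : CNFPCFG N T) : ∀ n X, tmassH G n X ≤ fseq G n X := by
  intro n
  induction n with
  | zero => intro X; simp [tmassH_zero, fseq_zero]
  | succ n ih =>
    intro X
    rw [tmassH_rec, fseq_succ]
    refine add_le_add le_rfl ?_
    calc ∑ A, ∑ B, G.pbin X A B * tmassH G n A * tmassH G n B
        ≤ ∑ A, ∑ B, G.pbin X A B * fseq G n A * 1 := by
          gcongr with A _ B _
          · exact ih A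
          · exact tmassH_le_one G n B
      _ = ∑ A, Qm G X A * fseq G n A := by
          refine Finset.sum_congr rfl fun A _ => ?_
          rw [Qm_apply, Finset.sum_mul]
          exact Finset.sum_congr rfl fun B _ => by ring

lemma tmass_le_iSup_fseq (G : CNFPCFG N T) (X : N) : tmass G X ≤ ⨆ k, fseq G k X :=
  (tmass_le_iSup_tmassH G X).trans (iSup_mono fun n => tmassH_le_fseq G n X)

/-- Left-spine decomposition identity. -/
lemma tmass_decomp (G : CNFPCFG N T) (hTight : Tight G) (hTrim : Trim G) :
    ∀ k X, tmass G X = fseq G k X + ∑ Y, (Qm G ^ k) X Y * tmass G Y := by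
  intro k
  induction k with
  | zero =>
    intro X
    rw [fseq_zero, zero_add, pow_zero]
    rw [Finset.sum_eq_single X (fun Y _ hY => by simp [Matrix.one_apply, Ne.symm hY])
      (by simp)]
    simp [Matrix.one_apply]
  | succ k ih =>
    intro X
    rw [tmass_rec' G hTight hTrim X]
    have : ∀ A, Qm G X A * tmass G A
        = Qm G X A * fseq G k A + ∑ Y, Qm G X A * ((Qm G ^ k) A Y * tmass G Y) := by
      intro A
      rw [ih A, mul_add, Finset.mul_sum]
    rw [Finset.sum_congr rfl fun A _ => this A, Finset.sum_add_distrib, ← add_assoc,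
      fseq_succ]
    congr 1
    rw [Finset.sum_comm]
    refine Finset.sum_congr rfl fun Y _ => ?_
    rw [pow_succ' (Qm G) k, Matrix.mul_apply, Finset.sum_mul]
    exact Finset.sum_congr rfl fun A _ => by ring

lemma fseq_ne_top (G : CNFPCFG N T) (hTight : Tight G) (hTrim : Trim G) (k : ℕ) (X : N) :
    fseq G k X ≠ ∞ := by
  intro h
  have := (fseq_le_tmass G hTight hTrim k X).trans (tmass_le_one G X)
  rw [h] at this
  simp at this

/-- The infimum of the weighted spine survival mass is zero. -/
lemma iInf_weighted_zero (G : CNFPCFG N T) (hTight : Tight G) (hTrim : Trim G) (X : N) :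
    ⨅ k, ∑ Y, (Qm G ^ k) X Y * tmass G Y = 0 := by
  have h1 : ∀ k, ∑ Y, (Qm G ^ k) X Y * tmass G Y = tmass G X - fseq G k X := by
    intro k
    rw [tmass_decomp G hTight hTrim k X,
      ENNReal.add_sub_cancel_left (fseq_ne_top G hTight hTrim k X)]
  rw [iInf_congr h1, ← ENNReal.sub_iSup (tmass_ne_top G X)]
  exact tsub_eq_zero_of_le (tmass_le_iSup_fseq G X)

end Aux5

section Aux6
variable {N T : Type} [Fintype N] [Fintype T] [DecidableEq N]

/-- Weighted spine survival mass. -/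
noncomputable def wsum (G : CNFPCFG N T) (k : ℕ) (X : N) : ℝ≥0∞ :=
  ∑ Y, (Qm G ^ k) X Y * tmass G Y

/-- Spine survival mass. -/
noncomputable def ssum (G : CNFPCFG N T) (k : ℕ) (X : N) : ℝ≥0∞ :=
  ∑ Y, (Qm G ^ k) X Y

lemma ssum_zero (G : CNFPCFG N T) (X : N) : ssum G 0 X = 1 := by
  rw [ssum, pow_zero,
    Finset.sum_eq_single X (fun Y _ hY => by simp [Matrix.one_apply, Ne.symm hY]) (by simp)]
  simp [Matrix.one_apply]

lemma ssum_one_le (G : CNFPCFG N T) (X : N) : ssum G 1 X ≤ 1 := by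
  rw [ssum]
  simp only [pow_one]
  calc ∑ Y, Qm G X Y = ∑ A, ∑ B, G.pbin X A B := rfl
    _ ≤ (∑ A, ∑ B, G.pbin X A B) + (∑ a, G.pterm X a) := le_self_add
    _ ≤ 1 := norm_le_one G X

lemma ssum_add (G : CNFPCFG N T) (a b : ℕ) (X : N) :
    ssum G (a + b) X = ∑ Y, (Qm G ^ a) X Y * ssum G b Y := by
  rw [ssum, pow_add]
  rw [Finset.sum_congr rfl fun Y _ => Matrix.mul_apply (M := Qm G ^ a) (N := Qm G ^ b)]
  rw [Finset.sum_comm]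
  exact Finset.sum_congr rfl fun Y _ => by rw [ssum, Finset.mul_sum]

lemma ssum_le_one (G : CNFPCFG N T) : ∀ k X, ssum G k X ≤ 1 := by
  intro k
  induction k with
  | zero => intro X; rw [ssum_zero]
  | succ k ih =>
    intro X
    have : (k : ℕ) + 1 = 1 + k := by omega
    rw [this, ssum_add]
    calc ∑ Y, (Qm G ^ 1) X Y * ssum G k Y ≤ ∑ Y, (Qm G ^ 1) X Y * 1 := by
          gcongr with Y _; exact ih Y
      _ = ssum G 1 X := by rw [ssum]; simp
      _ ≤ 1 := ssum_one_le G X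

lemma ssum_succ_le (G : CNFPCFG N T) : ∀ k X, ssum G (k + 1) X ≤ ssum G k X := by
  intro k
  induction k with
  | zero => intro X; rw [ssum_zero]; exact ssum_one_le G X
  | succ k ih =>
    intro X
    calc ssum G (k + 1 + 1) X = ∑ Y, (Qm G ^ 1) X Y * ssum G (k + 1) Y := by
          rw [show k + 1 + 1 = 1 + (k + 1) from by omega, ssum_add]
      _ ≤ ∑ Y, (Qm G ^ 1) X Y * ssum G k Y := by gcongr with Y _; exact ih Y
      _ = ssum G (k + 1) X := by rw [show k + 1 = 1 + k from by omega, ssum_add]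

lemma ssum_anti (G : CNFPCFG N T) (X : N) : Antitone fun k => ssum G k X :=
  antitone_nat_of_succ_le fun k => ssum_succ_le G k X

lemma wsum_zero (G : CNFPCFG N T) (X : N) : wsum G 0 X = tmass G X := by
  rw [wsum, pow_zero,
    Finset.sum_eq_single X (fun Y _ hY => by simp [Matrix.one_apply, Ne.symm hY]) (by simp)]
  simp [Matrix.one_apply]

lemma wsum_succ (G : CNFPCFG N T) (k : ℕ) (X : N) :
    wsum G (k + 1) X = ∑ A, Qm G X A * wsum G k A := by
  rw [wsum, Finset.sum_congr rfl fun Y _ =>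
    by rw [pow_succ' (Qm G) k, Matrix.mul_apply, Finset.sum_mul], Finset.sum_comm]
  exact Finset.sum_congr rfl fun A _ => by
    rw [wsum, Finset.mul_sum]
    exact Finset.sum_congr rfl fun Y _ => by ring

lemma wsum_succ_le (G : CNFPCFG N T) (hTight : Tight G) (hTrim : Trim G) :
    ∀ k X, wsum G (k + 1) X ≤ wsum G k X := by
  intro k
  induction k with
  | zero =>
    intro X
    rw [wsum_succ]
    simp only [wsum_zero]
    rw [tmass_rec' G hTight hTrim X]
    exact le_add_self
  | succ k ih =>
    intro X
    rw [wsum_succ, wsum_succ]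
    gcongr with A _
    exact ih A

lemma wsum_anti (G : CNFPCFG N T) (hTight : Tight G) (hTrim : Trim G) (X : N) :
    Antitone fun k => wsum G k X :=
  antitone_nat_of_succ_le fun k => wsum_succ_le G hTight hTrim k X

lemma Qpow_entry_tmass_one (G : CNFPCFG N T) (hTight : Tight G) (hTrim : Trim G)
    (k : ℕ) (X Y : N) (h : (Qm G ^ (k + 1)) X Y ≠ 0) : tmass G Y = 1 := by
  rw [pow_succ, Matrix.mul_apply] at h
  obtain ⟨A, -, hA⟩ := Finset.exists_ne_zero_of_sum_ne_zero h
  have hQ : Qm G A Y ≠ 0 := right_ne_zero_of_mul hA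
  rw [Qm_apply] at hQ
  obtain ⟨B, -, hB⟩ := Finset.exists_ne_zero_of_sum_ne_zero hQ
  exact (child_one G hTight hTrim A Y B hB).1

lemma ssum_eq_wsum (G : CNFPCFG N T) (hTight : Tight G) (hTrim : Trim G) (k : ℕ) (X : N) :
    ssum G (k + 1) X = wsum G (k + 1) X := by
  rw [ssum, wsum]
  refine Finset.sum_congr rfl fun Y _ => ?_
  by_cases h : (Qm G ^ (k + 1)) X Y = 0
  · rw [h, zero_mul]
  · rw [Qpow_entry_tmass_one G hTight hTrim k X Y h, mul_one]

lemma exists_K (G : CNFPCFG N T) (hTight : Tight G) (hTrim : Trim G) :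
    ∃ K : ℕ, 1 ≤ K ∧ ∀ X, ssum G K X ≤ 2⁻¹ := by
  have h0 : ∀ X : N, ∃ k, wsum G k X < 2⁻¹ := by
    intro X
    have : ⨅ k, wsum G k X = 0 := iInf_weighted_zero G hTight hTrim X
    have hlt : ⨅ k, wsum G k X < 2⁻¹ := by
      rw [this]
      exact ENNReal.inv_pos.mpr ENNReal.ofNat_ne_top
    exact iInf_lt_iff.mp hlt
  choose kf hkf using h0
  refine ⟨(Finset.univ.sup kf) + 1, by omega, fun X => ?_⟩
  rw [ssum_eq_wsum G hTight hTrim]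
  calc wsum G (Finset.univ.sup kf + 1) X ≤ wsum G (kf X) X := by
        refine wsum_anti G hTight hTrim X ?_
        exact (Finset.le_sup (Finset.mem_univ X)).trans (Nat.le_succ _)
    _ ≤ 2⁻¹ := (hkf X).le

lemma ssum_geom (G : CNFPCFG N T) {K : ℕ} (hK : ∀ X, ssum G K X ≤ 2⁻¹) :
    ∀ m X, ssum G (m * K) X ≤ 2⁻¹ ^ m := by
  intro m
  induction m with
  | zero => intro X; simp [ssum_zero]
  | succ m ih =>
    intro X
    have h1 : (m + 1) * K = K + m * K := by ring
    rw [h1, ssum_add]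
    calc ∑ Y, (Qm G ^ K) X Y * ssum G (m * K) Y
        ≤ ∑ Y, (Qm G ^ K) X Y * 2⁻¹ ^ m := by gcongr with Y _; exact ih Y
      _ = ssum G K X * 2⁻¹ ^ m := by rw [ssum, Finset.sum_mul]
      _ ≤ 2⁻¹ * 2⁻¹ ^ m := by gcongr; exact hK X
      _ = 2⁻¹ ^ (m + 1) := (pow_succ' 2⁻¹ m).symm

lemma tsum_ssum_ne_top (G : CNFPCFG N T) (hTight : Tight G) (hTrim : Trim G) (X : N) :
    (∑' k, ssum G k X) ≠ ∞ := by
  obtain ⟨K, hK1, hK⟩ := exists_K G hTight hTrim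
  haveI : NeZero K := ⟨by omega⟩
  have heq : (∑' p : ℕ × Fin K, ssum G (p.1 * K + ↑p.2) X) = ∑' k, ssum G k X := by
    have := Equiv.tsum_eq (Nat.divModEquiv K).symm (fun k => ssum G k X)
    simpa [Nat.divModEquiv] using this
  rw [← heq]
  have hle : (∑' p : ℕ × Fin K, ssum G (p.1 * K + ↑p.2) X)
      ≤ ∑' p : ℕ × Fin K, 2⁻¹ ^ p.1 := by
    refine ENNReal.tsum_le_tsum fun p => ?_
    calc ssum G (p.1 * K + ↑p.2) X ≤ ssum G (p.1 * K) X :=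
          ssum_anti G X (Nat.le_add_right _ _)
      _ ≤ 2⁻¹ ^ p.1 := ssum_geom G hK p.1 X
  refine ne_top_of_le_ne_top ?_ hle
  rw [ENNReal.tsum_prod']
  have : ∀ m : ℕ, (∑' _ : Fin K, (2⁻¹ : ℝ≥0∞) ^ m) = (K : ℝ≥0∞) * 2⁻¹ ^ m := by
    intro m
    rw [tsum_fintype]
    simp [Finset.sum_const, nsmul_eq_mul]
  rw [tsum_congr this, ENNReal.tsum_mul_left, ENNReal.tsum_geometric]
  refine ENNReal.mul_ne_top (ENNReal.natCast_ne_top K) ?_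
  refine ENNReal.inv_ne_top.mpr ?_
  intro h0
  rw [tsub_eq_zero_iff_le] at h0
  have : (2⁻¹ : ℝ≥0∞) < 1 := by
    rw [ENNReal.inv_lt_one]
    exact ENNReal.one_lt_two
  exact absurd h0 (not_le.mpr this)

lemma tsum_Qpow_ne_top (G : CNFPCFG N T) (hTight : Tight G) (hTrim : Trim G) (X Y : N) :
    (∑' k, (Qm G ^ k) X Y) ≠ ∞ := by
  refine ne_top_of_le_ne_top (tsum_ssum_ne_top G hTight hTrim X) ?_
  refine ENNReal.tsum_le_tsum fun k => ?_
  exact Finset.single_le_sum (f := fun Y => (Qm G ^ k) X Y) (fun _ _ => zero_le)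
    (Finset.mem_univ Y)

end Aux6

section Aux7
variable {N T : Type} [Fintype N] [Fintype T] [DecidableEq N]

/-- Length-graded spine mass. -/
noncomputable def FF (G : CNFPCFG N T) (k : ℕ) (X Y : N) : ℝ≥0∞ :=
  ∑' c : List (N × N), if c.length = k ∧ spineEnd X c = Y then spineProb G X c else 0

lemma Elc_eq_tsum_FF (G : CNFPCFG N T) (X Y : N) : Elc G X Y = ∑' k, FF G k X Y := by
  have h0 : Elc G X Y = ∑' c : List (N × N), if spineEnd X c = Y then spineProb G X c else 0 := by
    rw [Elc, show (fun c : List (N × N) => if spineEnd X c = Y then spineProb G X c else 0)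
        = {c : List (N × N) | spineEnd X c = Y}.indicator (spineProb G X) from
      funext fun c => by simp [Set.indicator_apply]]
    exact tsum_subtype {c : List (N × N) | spineEnd X c = Y} (spineProb G X)
  rw [h0]
  have h1 : ∀ c : List (N × N), (if spineEnd X c = Y then spineProb G X c else 0)
      = ∑' k : ℕ, if c.length = k ∧ spineEnd X c = Y then spineProb G X c else 0 := by
    intro c
    rw [tsum_eq_single c.length (fun k hk => by simp [Ne.symm hk])]
    simp
  rw [tsum_congr h1, ENNReal.tsum_comm]
  rfl

lemma FF_zero (G : CNFPCFG N T) (X Y : N) : FF G 0 X Y = if X = Y then 1 else 0 := by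
  rw [FF, tsum_eq_single ([] : List (N × N)) (fun c hc => by
    have : c.length ≠ 0 := fun h => hc (List.length_eq_zero_iff.mp h)
    simp [this])]
  by_cases h : X = Y <;> simp [spineEnd, spineProb, h]

lemma FF_succ (G : CNFPCFG N T) (k : ℕ) (X Y : N) :
    FF G (k + 1) X Y = ∑ A, Qm G X A * FF G k A Y := by
  rw [FF, tsum_split_list]
  have hnil : (if ([] : List (N × N)).length = k + 1 ∧ spineEnd X [] = Y
      then spineProb G X [] else 0) = 0 := by simp
  rw [hnil, zero_add]
  have hsum : ∀ q : (N × N) × List (N × N),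
      (if (q.1 :: q.2).length = k + 1 ∧ spineEnd X (q.1 :: q.2) = Y
        then spineProb G X (q.1 :: q.2) else 0)
      = G.pbin X q.1.1 q.1.2
          * (if q.2.length = k ∧ spineEnd q.1.1 q.2 = Y then spineProb G q.1.1 q.2 else 0) := by
    rintro ⟨⟨A, B⟩, c⟩
    by_cases h : c.length = k ∧ spineEnd A c = Y
    · rw [if_pos ⟨by simp [h.1], by simp [spineEnd, h.2]⟩, if_pos h]
      simp [spineProb]
    · rw [if_neg (fun hcon => h ⟨by simpa using hcon.1, by simpa [spineEnd] using hcon.2⟩),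
        if_neg h, mul_zero]
  rw [tsum_congr hsum, ENNReal.tsum_prod']
  have h2 : ∀ p : N × N, (∑' c : List (N × N), G.pbin X p.1 p.2
      * (if c.length = k ∧ spineEnd p.1 c = Y then spineProb G p.1 c else 0))
      = G.pbin X p.1 p.2 * FF G k p.1 Y := by
    intro p
    rw [ENNReal.tsum_mul_left, FF]
  rw [tsum_congr h2, tsum_fintype, Fintype.sum_prod_type]
  refine Finset.sum_congr rfl fun A _ => ?_
  rw [Qm_apply, Finset.sum_mul]

lemma FF_eq_pow (G : CNFPCFG N T) : ∀ (k : ℕ) (X Y : N), FF G k X Y = (Qm G ^ k) X Y := by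
  intro k
  induction k with
  | zero => intro X Y; rw [FF_zero, pow_zero, Matrix.one_apply]
  | succ k ih =>
    intro X Y
    rw [FF_succ, pow_succ' (Qm G) k, Matrix.mul_apply]
    exact Finset.sum_congr rfl fun A _ => by rw [ih A Y]

lemma Elc_eq_tsum_pow (G : CNFPCFG N T) (X Y : N) :
    Elc G X Y = ∑' k, (Qm G ^ k) X Y := by
  rw [Elc_eq_tsum_FF]
  exact tsum_congr fun k => FF_eq_pow G k X Y

lemma Elc_ne_top (G : CNFPCFG N T) (hTight : Tight G) (hTrim : Trim G) (X Y : N) :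
    Elc G X Y ≠ ∞ := by
  rw [Elc_eq_tsum_pow]
  exact tsum_Qpow_ne_top G hTight hTrim X Y

end Aux7

/-- For a tight, trim PCFG in CNF, let `P` be the real left-corner
transition matrix with `P X Y = ∑_{Z ∈ N} p(X → Y Z)`.  Then the series `∑ₖ Pᵏ` converges
entrywise, its sum `M` being the matrix of left-corner expectations, `M X Y = E_lc(Y ∣ X)`;
consequently `I - P` is invertible and the matrix of left-corner expectations equals
`(I - P)⁻¹`. -/

theorem leftCorner_matrix_eq_inv (G : CNFPCFG N T) (hTight : Tight G) (hTrim : Trim G)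
    (P M : Matrix N N ℝ)
    (hP : ∀ X Y : N, P X Y = (∑ Z : N, G.pbin X Y Z).toReal)
    (hM : ∀ X Y : N, M X Y = (Elc G X Y).toReal) :
    HasSum (fun m : ℕ => P ^ m) M ∧ IsUnit (1 - P) ∧ M = (1 - P)⁻¹ := by
  have hPQ : ∀ X Y, P X Y = ((Qm G) X Y).toReal := fun X Y => by rw [hP X Y]; rfl
  have hQfinEntry : ∀ (m : ℕ) (X Y : N), (Qm G ^ m) X Y ≠ ∞ := by
    intro m X Y
    have h1 : (Qm G ^ m) X Y ≤ 1 := by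
      refine le_trans ?_ (ssum_le_one G m X)
      exact Finset.single_le_sum (f := fun Y => (Qm G ^ m) X Y) (fun _ _ => zero_le)
        (Finset.mem_univ Y)
    exact ne_top_of_le_ne_top ENNReal.one_ne_top h1
  have hQfin1 : ∀ X Y : N, Qm G X Y ≠ ∞ := by
    intro X Y
    have := hQfinEntry 1 X Y
    rwa [pow_one] at this
  have hPpow : ∀ (m : ℕ) (X Y : N), (P ^ m) X Y = ((Qm G ^ m) X Y).toReal := by
    intro m
    induction m with
    | zero =>
      intro X Y
      rw [pow_zero, pow_zero]
      by_cases h : X = Y <;> simp [Matrix.one_apply, h]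
    | succ m ih =>
      intro X Y
      rw [pow_succ, pow_succ, Matrix.mul_apply, Matrix.mul_apply]
      rw [Finset.sum_congr rfl fun A _ => by rw [ih X A, hPQ A Y, ← ENNReal.toReal_mul]]
      rw [← ENNReal.toReal_sum
        (fun A _ => ENNReal.mul_ne_top (hQfinEntry m X A) (hQfin1 A Y))]
  have hM' : ∀ X Y : N, M X Y = ∑' k, ((Qm G ^ k) X Y).toReal := by
    intro X Y
    rw [hM X Y, Elc_eq_tsum_pow, ENNReal.tsum_toReal_eq (fun k => hQfinEntry k X Y)]
  have hHas : HasSum (fun m : ℕ => P ^ m) M := by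
    refine Pi.hasSum.mpr fun X => Pi.hasSum.mpr fun Y => ?_
    have h1 := ENNReal.hasSum_toReal (tsum_Qpow_ne_top G hTight hTrim X Y)
    have heq : (fun m : ℕ => (P ^ m) X Y) = fun m => ((Qm G ^ m) X Y).toReal :=
      funext fun m => hPpow m X Y
    rw [heq, hM' X Y]
    exact h1
  have hptends : Filter.Tendsto (fun m : ℕ => P ^ m) Filter.atTop (nhds 0) := by
    have := hHas.summable.tendsto_cofinite_zero
    rwa [Nat.cofinite_eq_atTop] at this
  have hpartial : Filter.Tendsto (fun n : ℕ => ∑ m ∈ Finset.range n, P ^ m)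
      Filter.atTop (nhds M) := hHas.tendsto_sum_nat
  have hlim1 : Filter.Tendsto (fun n : ℕ => 1 - P ^ n) Filter.atTop (nhds 1) := by
    have h3 : Filter.Tendsto (fun n : ℕ => (1 : Matrix N N ℝ) - P ^ n)
        Filter.atTop (nhds (1 - 0)) := tendsto_const_nhds.sub hptends
    rwa [sub_zero] at h3
  have hmul₂ : M * (1 - P) = 1 := by
    have h1 : Filter.Tendsto (fun n : ℕ => (∑ m ∈ Finset.range n, P ^ m) * (1 - P))
        Filter.atTop (nhds (M * (1 - P))) := hpartial.mul tendsto_const_nhds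
    have h2 : ∀ n : ℕ, (∑ m ∈ Finset.range n, P ^ m) * (1 - P) = 1 - P ^ n := by
      intro n
      calc (∑ m ∈ Finset.range n, P ^ m) * (1 - P)
          = -((∑ m ∈ Finset.range n, P ^ m) * (P - 1)) := by rw [← mul_neg, neg_sub]
        _ = -(P ^ n - 1) := by rw [geom_sum_mul]
        _ = 1 - P ^ n := by rw [neg_sub]
    exact tendsto_nhds_unique ((Filter.Tendsto.congr h2) h1) hlim1
  have hmul₁ : (1 - P) * M = 1 := by
    have h1 : Filter.Tendsto (fun n : ℕ => (1 - P) * ∑ m ∈ Finset.range n, P ^ m)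
        Filter.atTop (nhds ((1 - P) * M)) := (tendsto_const_nhds.mul hpartial)
    have h2 : ∀ n : ℕ, (1 - P) * (∑ m ∈ Finset.range n, P ^ m) = 1 - P ^ n := by
      intro n
      calc (1 - P) * (∑ m ∈ Finset.range n, P ^ m)
          = -((P - 1) * ∑ m ∈ Finset.range n, P ^ m) := by rw [← neg_mul, neg_sub]
        _ = -(P ^ n - 1) := by rw [mul_geom_sum]
        _ = 1 - P ^ n := by rw [neg_sub]
    exact tendsto_nhds_unique ((Filter.Tendsto.congr h2) h1) hlim1
  exact ⟨hHas, ⟨⟨1 - P, M, hmul₁, hmul₂⟩, rfl⟩, (Matrix.inv_eq_left_inv hmul₂).symm⟩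
end

section
/- Let G = (N, Σ, S, R, p) be a tight, trim probabilistic context-free grammar in Chomsky normal form, let w = w₁ ⋯ w_N ∈ Σ* be a string, and let 1 ≤ k ≤ N. Then the single-token prefix probability satisfies p_π(k, k | X) = ∑_{Y ∈ N} E_lc(Y | X) · p(Y → w_k) for every X ∈ N; that is, the probability ∑_{u ∈ Σ*} p(X ⇒* w_k u) of deriving a string beginning with the token w_k from X equals the sum over Y of the left-corner expectation of Y given X times the probability of the terminal rule Y → w_k. -/
open scoped ENNReal

variable {N T : Type} [Fintype N] [Fintype T] [DecidableEq N]

/-! ### Auxiliary machinery -/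

set_option linter.unusedSectionVars false

section AuxMachinery

open DTree

/-- Partition function: total probability of derivation trees rooted at `X`. -/
noncomputable def Zt (G : CNFPCFG N T) (X : N) : ℝ≥0∞ :=
  ∑' τ : {τ : DTree N T // τ.root = X}, treeProb G τ.1

lemma tsum_fiber {α : Type*} (φ : α → N) (f : α → ℝ≥0∞) :
    ∑' x : α, f x = ∑ B : N, ∑' x : {x : α // φ x = B}, f x.1 := by
  rw [← (Equiv.sigmaFiberEquiv φ).tsum_eq f, ENNReal.tsum_sigma', tsum_fintype]
  rfl

lemma tsum_fiber_ite {α : Type*} (φ : α → N) (B : N) (f : α → ℝ≥0∞) :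
    ∑' x : {x : α // φ x = B}, f x.1 = ∑' x : α, if φ x = B then f x else 0 :=
  (tsum_subtype {x : α | φ x = B} f).trans
    (tsum_congr fun x => by by_cases h : φ x = B <;> simp [Set.indicator_apply, h])

lemma tsum_list_cons {α : Type*} (f : List α → ℝ≥0∞) (hnil : f [] = 0) :
    ∑' c : List α, f c = ∑' p : α × List α, f (p.1 :: p.2) := by
  have hinj : Function.Injective (fun p : α × List α => p.1 :: p.2) := by
    rintro ⟨x, l⟩ ⟨y, m⟩ h
    simp only [List.cons.injEq] at h
    simp [h.1, h.2]
  have hsupp : Function.support f ⊆ Set.range (fun p : α × List α => p.1 :: p.2) := by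
    intro c hc
    match c with
    | [] => exact absurd hnil hc
    | x :: l => exact ⟨(x, l), rfl⟩
  exact (Function.Injective.tsum_eq hinj hsupp).symm

variable (G : CNFPCFG N T)

lemma Zt_eq_ite (X : N) :
    Zt G X = ∑' τ : DTree N T, if τ.root = X then treeProb G τ else 0 :=
  tsum_fiber_ite DTree.root X (treeProb G)

lemma norm_le_one_s6 (X : N) :
    ((∑ Y, ∑ Z, G.pbin X Y Z) + ∑ b, G.pterm X b) ≤ 1 := by
  by_cases h : (∃ Y Z, G.pbin X Y Z ≠ 0) ∨ (∃ b, G.pterm X b ≠ 0) ∨ (X = G.S ∧ G.peps ≠ 0)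
  · exact le_self_add.trans (G.locally_normalized X h).le
  · push_neg at h
    obtain ⟨h1, h2, -⟩ := h
    simp only [h1, h2]
    simp

/-- size of a derivation tree -/
def dsize : DTree N T → ℕ
  | .leaf _ _ => 1
  | .node _ l r => dsize l + dsize r + 1

lemma treeProb_node (X : N) (l r : DTree N T) :
    treeProb G (.node X l r) = G.pbin X l.root r.root * treeProb G l * treeProb G r := rfl

/-- leaf part of a root-indexed decomposition -/
noncomputable def fleafP (G : CNFPCFG N T) (X : N) : DTree N T → ℝ≥0∞
  | .leaf Y b => if Y = X then G.pterm Y b else 0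
  | .node _ _ _ => 0

/-- node part of a root-indexed decomposition, with an extra condition `P` on subtrees -/
noncomputable def fnodeP (G : CNFPCFG N T) (X : N) (P : DTree N T → DTree N T → Prop)
    [∀ l r, Decidable (P l r)] : DTree N T → ℝ≥0∞
  | .leaf _ _ => 0
  | .node Y l r => if Y = X ∧ P l r then treeProb G (.node Y l r) else 0

lemma tsum_fleafP (X : N) : ∑' τ : DTree N T, fleafP G X τ = ∑ b, G.pterm X b := by
  have h1 : ∑' b : T, fleafP G X (.leaf X b) = ∑' τ : DTree N T, fleafP G X τ := by
    refine Function.Injective.tsum_eq (g := fun b : T => (DTree.leaf X b : DTree N T)) ?_ ?_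
    · intro x y h; simpa using h
    · intro τ hτ
      match τ, hτ with
      | .leaf Y b, hτ =>
        have hY : Y = X := by by_contra h; exact hτ (by simp [fleafP, h])
        exact ⟨b, by rw [hY]⟩
  rw [← h1, tsum_fintype]
  exact Finset.sum_congr rfl fun b _ => by simp [fleafP]

lemma tsum_fnodeP (X : N) (P : DTree N T → DTree N T → Prop) [∀ l r, Decidable (P l r)] :
    ∑' τ : DTree N T, fnodeP G X P τ =
      ∑' p : DTree N T × DTree N T,
        if P p.1 p.2 then treeProb G (.node X p.1 p.2) else 0 := by
  have h1 : ∑' p : DTree N T × DTree N T, fnodeP G X P (.node X p.1 p.2)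
      = ∑' τ : DTree N T, fnodeP G X P τ := by
    refine Function.Injective.tsum_eq
      (g := fun p : DTree N T × DTree N T => (DTree.node X p.1 p.2 : DTree N T)) ?_ ?_
    · rintro ⟨x1, x2⟩ ⟨y1, y2⟩ h
      simp only [DTree.node.injEq] at h
      simp [h.1, h.2]
    · intro τ hτ
      match τ, hτ with
      | .node Y l r, hτ =>
        have hY : Y = X := by by_contra h; exact hτ (by simp [fnodeP, h])
        exact ⟨(l, r), by rw [hY]⟩
  rw [← h1]
  exact tsum_congr fun p => by simp [fnodeP]

/-- The size-bounded partition function is at most one. -/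
lemma bounded_le_one : ∀ (n : ℕ) (X : N),
    (∑' τ : DTree N T, if τ.root = X ∧ dsize τ ≤ n then treeProb G τ else 0) ≤ 1 := by
  intro n
  induction n with
  | zero =>
    intro X
    have hz : ∀ τ : DTree N T, (if DTree.root τ = X ∧ dsize τ ≤ 0 then treeProb G τ else 0) = 0 := by
      intro τ
      have : dsize τ ≠ 0 := by cases τ <;> simp [dsize]
      simp [this]
    rw [tsum_congr hz]
    simp
  | succ n ih =>
    intro X
    have hsplit : ∀ τ : DTree N T,
        (if τ.root = X ∧ dsize τ ≤ n + 1 then treeProb G τ else 0) ≤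
          fleafP G X τ + fnodeP G X (fun l r => dsize l + dsize r + 1 ≤ n + 1) τ := by
      intro τ
      cases τ with
      | leaf Y b =>
        by_cases h : Y = X <;> simp [fleafP, fnodeP, DTree.root, dsize, h, treeProb]
      | node Y l r =>
        simp only [fleafP, fnodeP, DTree.root, dsize, zero_add]
        exact le_of_eq rfl
    have hn : (∑' τ : DTree N T, fnodeP G X (fun l r => dsize l + dsize r + 1 ≤ n + 1) τ)
        ≤ ∑ Y, ∑ Z, G.pbin X Y Z := by
      rw [tsum_fnodeP]
      have h3 : ∀ p : DTree N T × DTree N T,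
          (if dsize p.1 + dsize p.2 + 1 ≤ n + 1 then treeProb G (.node X p.1 p.2) else 0) ≤
          G.pbin X p.1.root p.2.root
            * (if dsize p.1 ≤ n then treeProb G p.1 else 0)
            * (if dsize p.2 ≤ n then treeProb G p.2 else 0) := by
        rintro ⟨l, r⟩
        by_cases h : dsize l + dsize r + 1 ≤ n + 1
        · have hls : dsize l ≤ n := by omega
          have hrs : dsize r ≤ n := by omega
          rw [if_pos h, if_pos hls, if_pos hrs, treeProb_node]
        · rw [if_neg h]; exact zero_le
      have key : ∀ (F : N → ℝ≥0∞),
          (∑' r : DTree N T, F r.root * (if dsize r ≤ n then treeProb G r else 0)) ≤ ∑ B, F B := by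
        intro F
        rw [tsum_fiber DTree.root (fun r => F r.root * (if dsize r ≤ n then treeProb G r else 0))]
        refine Finset.sum_le_sum fun B _ => ?_
        have h4 : ∑' r : {r : DTree N T // r.root = B},
            F r.1.root * (if dsize r.1 ≤ n then treeProb G r.1 else 0)
            = F B * ∑' r : {r : DTree N T // r.root = B},
                (if dsize r.1 ≤ n then treeProb G r.1 else 0) := by
          rw [← ENNReal.tsum_mul_left]
          exact tsum_congr fun r => by rw [r.2]
        rw [h4]
        have h5 : (∑' r : {r : DTree N T // r.root = B},
            (if dsize r.1 ≤ n then treeProb G r.1 else 0)) ≤ 1 := by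
          rw [tsum_fiber_ite DTree.root B (fun r => if dsize r ≤ n then treeProb G r else 0)]
          refine le_trans (le_of_eq (tsum_congr fun r => ?_)) (ih B)
          by_cases h : r.root = B <;> by_cases h' : dsize r ≤ n <;> simp [h, h']
        exact mul_le_of_le_one_right' h5
      calc ∑' p : DTree N T × DTree N T,
            (if dsize p.1 + dsize p.2 + 1 ≤ n + 1 then treeProb G (.node X p.1 p.2) else 0)
          ≤ ∑' p : DTree N T × DTree N T, G.pbin X p.1.root p.2.root
              * (if dsize p.1 ≤ n then treeProb G p.1 else 0)
              * (if dsize p.2 ≤ n then treeProb G p.2 else 0) :=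
            ENNReal.tsum_le_tsum h3
        _ = ∑' l : DTree N T, ∑' r : DTree N T, G.pbin X l.root r.root
              * (if dsize l ≤ n then treeProb G l else 0)
              * (if dsize r ≤ n then treeProb G r else 0) :=
            ENNReal.tsum_prod (f := fun l r => G.pbin X l.root r.root
              * (if dsize l ≤ n then treeProb G l else 0)
              * (if dsize r ≤ n then treeProb G r else 0))
        _ ≤ ∑ Y, ∑ Z, G.pbin X Y Z := by
            calc ∑' l : DTree N T, ∑' r : DTree N T, G.pbin X l.root r.root
                  * (if dsize l ≤ n then treeProb G l else 0)
                  * (if dsize r ≤ n then treeProb G r else 0)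
                ≤ ∑' l : DTree N T, ∑ B : N, G.pbin X l.root B
                    * (if dsize l ≤ n then treeProb G l else 0) := by
                  refine ENNReal.tsum_le_tsum fun l => ?_
                  exact key (fun B => G.pbin X l.root B * (if dsize l ≤ n then treeProb G l else 0))
              _ = ∑ B : N, ∑' l : DTree N T, G.pbin X l.root B
                    * (if dsize l ≤ n then treeProb G l else 0) := by
                  rw [← tsum_fintype (L := .unconditional _), tsum_congr (fun l : DTree N T =>
                    (tsum_fintype (L := .unconditional _) (fun B : N => G.pbin X l.root B
                      * (if dsize l ≤ n then treeProb G l else 0))).symm)]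
                  exact ENNReal.tsum_comm (f := fun l B => G.pbin X l.root B
                    * (if dsize l ≤ n then treeProb G l else 0))
              _ ≤ ∑ B : N, ∑ Y : N, G.pbin X Y B :=
                  Finset.sum_le_sum fun B _ => key (fun Y => G.pbin X Y B)
              _ = ∑ Y, ∑ Z, G.pbin X Y Z := Finset.sum_comm
    calc (∑' τ : DTree N T, if τ.root = X ∧ dsize τ ≤ n + 1 then treeProb G τ else 0)
        ≤ ∑' τ : DTree N T,
            (fleafP G X τ + fnodeP G X (fun l r => dsize l + dsize r + 1 ≤ n + 1) τ) :=
          ENNReal.tsum_le_tsum hsplit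
      _ = (∑' τ : DTree N T, fleafP G X τ)
            + ∑' τ : DTree N T, fnodeP G X (fun l r => dsize l + dsize r + 1 ≤ n + 1) τ :=
          ENNReal.tsum_add
      _ ≤ (∑ b, G.pterm X b) + ∑ Y, ∑ Z, G.pbin X Y Z := by
          rw [tsum_fleafP]; exact add_le_add_right hn _
      _ = (∑ Y, ∑ Z, G.pbin X Y Z) + ∑ b, G.pterm X b := add_comm _ _
      _ ≤ 1 := norm_le_one_s6 G X

end AuxMachinery

section AuxMachinery2

open DTree

variable (G : CNFPCFG N T)

lemma Zt_le_one (X : N) : Zt G X ≤ 1 := by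
  rw [Zt_eq_ite, ENNReal.tsum_eq_iSup_sum]
  refine iSup_le fun s => ?_
  set n : ℕ := s.sup dsize with hn
  calc ∑ τ ∈ s, (if τ.root = X then treeProb G τ else 0)
      ≤ ∑ τ ∈ s, (if τ.root = X ∧ dsize τ ≤ n then treeProb G τ else 0) := by
        refine Finset.sum_le_sum fun τ hτ => ?_
        have hs : dsize τ ≤ n := Finset.le_sup hτ
        by_cases h : τ.root = X <;> simp [h, hs]
    _ ≤ ∑' τ : DTree N T, (if τ.root = X ∧ dsize τ ≤ n then treeProb G τ else 0) :=
        ENNReal.summable.sum_le_tsum s (fun _ _ => zero_le)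
    _ ≤ 1 := bounded_le_one G n X

lemma Zt_recursion (X : N) :
    Zt G X = (∑ Y, ∑ Z, G.pbin X Y Z * Zt G Y * Zt G Z) + ∑ b, G.pterm X b := by
  have hsplit : ∀ τ : DTree N T,
      (if τ.root = X then treeProb G τ else 0)
        = fnodeP G X (fun _ _ => True) τ + fleafP G X τ := by
    intro τ
    cases τ with
    | leaf Y b => by_cases h : Y = X <;> simp [fleafP, fnodeP, DTree.root, h, treeProb]
    | node Y l r => by_cases h : Y = X <;> simp [fleafP, fnodeP, DTree.root, h]
  rw [Zt_eq_ite, tsum_congr hsplit, ENNReal.tsum_add, tsum_fleafP]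
  congr 1
  rw [tsum_fnodeP]
  have h1 : ∀ p : DTree N T × DTree N T,
      (if True then treeProb G (.node X p.1 p.2) else 0)
        = G.pbin X p.1.root p.2.root * treeProb G p.1 * treeProb G p.2 := by
    intro p; rw [if_pos trivial, treeProb_node]
  rw [tsum_congr h1, ENNReal.tsum_prod (f := fun l r =>
    G.pbin X l.root r.root * treeProb G l * treeProb G r)]
  have h2 : ∀ l : DTree N T,
      (∑' r : DTree N T, G.pbin X l.root r.root * treeProb G l * treeProb G r)
        = ∑ Z : N, G.pbin X l.root Z * treeProb G l * Zt G Z := by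
    intro l
    rw [tsum_fiber DTree.root (fun r => G.pbin X l.root r.root * treeProb G l * treeProb G r)]
    refine Finset.sum_congr rfl fun Z _ => ?_
    rw [show G.pbin X l.root Z * treeProb G l * Zt G Z
        = G.pbin X l.root Z * treeProb G l
          * ∑' r : {r : DTree N T // r.root = Z}, treeProb G r.1 from rfl,
      ← ENNReal.tsum_mul_left]
    exact tsum_congr fun r => by rw [r.2]
  rw [tsum_congr h2]
  rw [tsum_congr (fun l : DTree N T => (tsum_fintype (L := .unconditional _) (fun Z : N =>
    G.pbin X l.root Z * treeProb G l * Zt G Z)).symm)]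
  rw [ENNReal.tsum_comm (f := fun l Z => G.pbin X l.root Z * treeProb G l * Zt G Z),
    tsum_fintype]
  rw [Finset.sum_comm]
  refine Finset.sum_congr rfl fun Y _ => ?_
  rw [tsum_fiber DTree.root (fun l => G.pbin X l.root Y * treeProb G l * Zt G Y)]
  refine Finset.sum_congr rfl fun B _ => ?_
  have h3 : ∀ l : {l : DTree N T // l.root = B},
      G.pbin X l.1.root Y * treeProb G l.1 * Zt G Y
        = (G.pbin X B Y * Zt G Y) * treeProb G l.1 := fun l => by rw [l.2]; ring
  rw [tsum_congr h3, ENNReal.tsum_mul_left]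
  show (G.pbin X B Y * Zt G Y) * Zt G B = G.pbin X B Y * Zt G B * Zt G Y
  ring

end AuxMachinery2

section AuxMachinery3

open DTree

lemma finsum_eq_of_le {ι : Type*} [Fintype ι] [DecidableEq ι] (f g : ι → ℝ≥0∞)
    (hle : ∀ i, f i ≤ g i) (hsum : ∑ i, f i = ∑ i, g i) (hfin : (∑ i, g i) ≠ ⊤) (i : ι) :
    f i = g i := by
  refine le_antisymm (hle i) ?_
  have h1 : g i + ∑ j ∈ Finset.univ.erase i, g j = ∑ j, g j :=
    Finset.add_sum_erase _ g (Finset.mem_univ i)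
  have h2 : f i + ∑ j ∈ Finset.univ.erase i, f j = ∑ j, f j :=
    Finset.add_sum_erase _ f (Finset.mem_univ i)
  have hfin2 : (∑ j ∈ Finset.univ.erase i, g j) ≠ ⊤ :=
    ne_top_of_le_ne_top hfin (Finset.sum_le_sum_of_subset (Finset.erase_subset _ _))
  have hchain : g i + ∑ j ∈ Finset.univ.erase i, g j
      ≤ f i + ∑ j ∈ Finset.univ.erase i, g j := by
    rw [h1, ← hsum, ← h2]
    exact add_le_add_right (Finset.sum_le_sum fun j _ => hle j) _
  exact (ENNReal.add_le_add_iff_right hfin2).mp hchain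

variable (G : CNFPCFG N T)

lemma Zt_children_eq_one {X Y Z : N}
    (hX : Zt G X + (if X = G.S then G.peps else 0) = 1) (hbin : G.pbin X Y Z ≠ 0) :
    Zt G Y = 1 ∧ Zt G Z = 1 := by
  have hnorm := G.locally_normalized X (Or.inl ⟨Y, Z, hbin⟩)
  have hrec := Zt_recursion G X
  have heq : (∑ A, ∑ B, G.pbin X A B * Zt G A * Zt G B) + (∑ b, G.pterm X b)
        + (if X = G.S then G.peps else 0)
      = (∑ A, ∑ B, G.pbin X A B) + (∑ b, G.pterm X b) + (if X = G.S then G.peps else 0) := by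
    rw [← hrec, hX, hnorm]
  have hite : (if X = G.S then G.peps else 0) ≠ ⊤ :=
    ne_top_of_le_ne_top ENNReal.one_ne_top (hnorm ▸ le_add_self)
  have heq2 := (ENNReal.add_left_inj hite).mp heq
  have hpt : (∑ b, G.pterm X b) ≠ ⊤ :=
    ne_top_of_le_ne_top ENNReal.one_ne_top
      (le_trans le_add_self (hnorm ▸ le_self_add))
  have heq3 := (ENNReal.add_left_inj hpt).mp heq2
  have hle : ∀ p : N × N, G.pbin X p.1 p.2 * Zt G p.1 * Zt G p.2 ≤ G.pbin X p.1 p.2 :=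
    fun p => le_trans (mul_le_of_le_one_right' (Zt_le_one G p.2))
      (mul_le_of_le_one_right' (Zt_le_one G p.1))
  have hsum : ∑ p : N × N, G.pbin X p.1 p.2 * Zt G p.1 * Zt G p.2
      = ∑ p : N × N, G.pbin X p.1 p.2 := by
    rw [Fintype.sum_prod_type, Fintype.sum_prod_type]
    exact heq3
  have hbfin : (∑ p : N × N, G.pbin X p.1 p.2) ≠ ⊤ := by
    rw [Fintype.sum_prod_type]
    exact ne_top_of_le_ne_top ENNReal.one_ne_top
      (le_trans le_self_add (le_trans le_self_add hnorm.le))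
  have key := finsum_eq_of_le _ _ hle hsum hbfin (Y, Z)
  have hpfin : G.pbin X Y Z ≠ ⊤ :=
    ne_top_of_le_ne_top hbfin
      (Finset.single_le_sum (f := fun p : N × N => G.pbin X p.1 p.2)
        (fun i _ => zero_le) (Finset.mem_univ (Y, Z)))
  have hmul : Zt G Y * Zt G Z = 1 := by
    have h := key
    simp only at h
    rw [mul_assoc] at h
    conv_rhs at h => rw [← mul_one (G.pbin X Y Z)]
    exact (ENNReal.mul_right_inj hbin hpfin).mp h
  constructor
  · refine le_antisymm (Zt_le_one G Y) ?_
    calc (1 : ℝ≥0∞) = Zt G Y * Zt G Z := hmul.symm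
      _ ≤ Zt G Y := mul_le_of_le_one_right' (Zt_le_one G Z)
  · refine le_antisymm (Zt_le_one G Z) ?_
    calc (1 : ℝ≥0∞) = Zt G Y * Zt G Z := hmul.symm
      _ ≤ Zt G Z := by rw [mul_comm]; exact mul_le_of_le_one_right' (Zt_le_one G Y)

lemma step_full (hTight : Tight G) {Y : N} (hone : Zt G Y = 1) :
    Zt G Y + (if Y = G.S then G.peps else 0) = 1 := by
  by_cases h : Y = G.S
  · rw [if_pos h, hone]
    have hS : Zt G G.S = 1 := h ▸ hone
    have : G.peps + Zt G G.S = 1 := hTight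
    rw [hS] at this
    have hz : G.peps = 0 := by
      have h0 : G.peps + 1 = 0 + 1 := by rw [this, zero_add]
      exact (ENNReal.add_left_inj ENNReal.one_ne_top).mp h0
    rw [hz, add_zero]
  · rw [if_neg h, add_zero]; exact hone

lemma reach_full (hTight : Tight G) : ∀ X : N, Reach G X →
    Zt G X + (if X = G.S then G.peps else 0) = 1 := by
  intro X hX
  induction hX with
  | start =>
    rw [if_pos rfl, add_comm]
    exact hTight
  | left hR hbin ih =>
    exact step_full G hTight (Zt_children_eq_one G ih hbin).1
  | right hR hbin ih =>
    exact step_full G hTight (Zt_children_eq_one G ih hbin).2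

lemma Zt_eq_one_of_rule (hTight : Tight G) (hTrim : Trim G) {X Y Z : N}
    (hbin : G.pbin X Y Z ≠ 0) : Zt G Y = 1 ∧ Zt G Z = 1 :=
  Zt_children_eq_one G (reach_full G hTight X (hTrim X)) hbin

end AuxMachinery3

section AuxMachinery4

open DTree

/-- Rebuild a tree from its left spine: right subtrees plus the terminal leaf. -/
def rebuild (a : T) : N → List (N × DTree N T) → DTree N T
  | X, [] => .leaf X a
  | X, (A, r) :: rest => .node X (rebuild a A rest) r

/-- The leftmost terminal of a tree. -/
def lmT : DTree N T → T
  | .leaf _ b => b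
  | .node _ l _ => lmT l

/-- The left spine of a tree: the list of right subtrees with spine labels. -/
def spineOf : DTree N T → List (N × DTree N T)
  | .leaf _ _ => []
  | .node _ l r => (l.root, r) :: spineOf l

@[simp] lemma rebuild_root (a : T) (X : N) (c : List (N × DTree N T)) :
    (rebuild a X c).root = X := by
  cases c with
  | nil => rfl
  | cons p rest => cases p; rfl

@[simp] lemma rebuild_lmT (a : T) : ∀ (c : List (N × DTree N T)) (X : N),
    lmT (rebuild a X c) = a := by
  intro c
  induction c with
  | nil => intro X; rfl
  | cons p rest ih => rintro X; cases p; exact ih _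

lemma rebuild_spineOf (a : T) : ∀ (c : List (N × DTree N T)) (X : N),
    spineOf (rebuild a X c) = c := by
  intro c
  induction c with
  | nil => intro X; rfl
  | cons p rest ih =>
    intro X
    cases p with
    | mk A r =>
      show (((rebuild a A rest).root, r) :: spineOf (rebuild a A rest)) = (A, r) :: rest
      rw [rebuild_root, ih]

lemma spineOf_rebuild : ∀ τ : DTree N T, rebuild (lmT τ) τ.root (spineOf τ) = τ := by
  intro τ
  induction τ with
  | leaf Y b => rfl
  | node Y l r ihl ihr =>
    show DTree.node Y (rebuild (lmT l) l.root (spineOf l)) r = DTree.node Y l r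
    rw [ihl]

lemma yield_ne_nil : ∀ τ : DTree N T, τ.yield ≠ [] := by
  intro τ
  induction τ with
  | leaf Y b => simp [DTree.yield]
  | node Y l r ihl ihr => simp [DTree.yield, ihl]

lemma head_yield : ∀ τ : DTree N T, τ.yield.head? = some (lmT τ) := by
  intro τ
  induction τ with
  | leaf Y b => rfl
  | node Y l r ihl ihr =>
    show (l.yield ++ r.yield).head? = some (lmT l)
    rw [List.head?_append_of_ne_nil _ (yield_ne_nil l), ihl]

/-- The spine decomposition equivalence. -/
def spineEquiv (a : T) (X : N) :
    {τ : DTree N T // τ.root = X ∧ τ.yield.head? = some a} ≃ List (N × DTree N T) where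
  toFun τ := spineOf τ.1
  invFun c := ⟨rebuild a X c, rebuild_root a X c, by rw [head_yield, rebuild_lmT]⟩
  left_inv := by
    rintro ⟨τ, hroot, hhead⟩
    have hlm : lmT τ = a := by
      have := head_yield τ
      rw [hhead] at this
      exact (Option.some_inj.mp this).symm
    refine Subtype.ext ?_
    show rebuild a X (spineOf τ) = τ
    rw [← hlm, ← hroot, spineOf_rebuild]
  right_inv c := rebuild_spineOf a c X

end AuxMachinery4

section AuxMachinery5

open DTree

variable (G : CNFPCFG N T)

/-- Sum of probabilities of trees with left spine length `n`, root `X`, leftmost terminal `a`. -/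
noncomputable def gS (a : T) (n : ℕ) (X : N) : ℝ≥0∞ :=
  ∑' c : List (N × DTree N T), if c.length = n then treeProb G (rebuild a X c) else 0

/-- Sum of probabilities of spines of length `n` from `X`, ending in terminal rule on `a`. -/
noncomputable def hS (a : T) (n : ℕ) (X : N) : ℝ≥0∞ :=
  ∑' c : List (N × N), if c.length = n then spineProb G X c * G.pterm (spineEnd X c) a else 0

lemma gS_zero (a : T) (X : N) : gS G a 0 X = G.pterm X a := by
  rw [gS, tsum_eq_single ([] : List (N × DTree N T))]
  · rfl
  · intro c hc
    rw [if_neg (fun h => hc (List.length_eq_zero_iff.mp h))]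

lemma hS_zero (a : T) (X : N) : hS G a 0 X = G.pterm X a := by
  rw [hS, tsum_eq_single ([] : List (N × N))]
  · show (if True then spineProb G X [] * G.pterm (spineEnd X []) a else 0) = _
    simp [spineProb, spineEnd]
  · intro c hc
    rw [if_neg (fun h => hc (List.length_eq_zero_iff.mp h))]

lemma gS_succ (hZ : ∀ {X' A B : N}, G.pbin X' A B ≠ 0 → Zt G B = 1)
    (a : T) (n : ℕ) (X : N) :
    gS G a (n + 1) X = ∑ A, ∑ B, G.pbin X A B * gS G a n A := by
  rw [gS, tsum_list_cons _ (by simp)]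
  have h1 : ∀ p : (N × DTree N T) × List (N × DTree N T),
      (if (p.1 :: p.2).length = n + 1 then treeProb G (rebuild a X (p.1 :: p.2)) else 0)
        = (G.pbin X p.1.1 p.1.2.root * treeProb G p.1.2)
            * (if p.2.length = n then treeProb G (rebuild a p.1.1 p.2) else 0) := by
    rintro ⟨⟨A, r⟩, rest⟩
    show (if rest.length + 1 = n + 1 then treeProb G (.node X (rebuild a A rest) r) else 0) = _
    rw [treeProb_node, rebuild_root]
    by_cases h : rest.length = n
    · rw [if_pos (by omega), if_pos h]; ring
    · rw [if_neg (by omega), if_neg h, mul_zero]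
  rw [tsum_congr h1, ENNReal.tsum_prod (f := fun (q : N × DTree N T) rest =>
    (G.pbin X q.1 q.2.root * treeProb G q.2)
      * (if rest.length = n then treeProb G (rebuild a q.1 rest) else 0))]
  have h2 : ∀ q : N × DTree N T,
      (∑' rest : List (N × DTree N T), (G.pbin X q.1 q.2.root * treeProb G q.2)
        * (if rest.length = n then treeProb G (rebuild a q.1 rest) else 0))
      = (G.pbin X q.1 q.2.root * treeProb G q.2) * gS G a n q.1 := fun q =>
    ENNReal.tsum_mul_left
  rw [tsum_congr h2, ENNReal.tsum_prod (f := fun (A : N) (r : DTree N T) =>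
    (G.pbin X A r.root * treeProb G r) * gS G a n A), tsum_fintype]
  refine Finset.sum_congr rfl fun A _ => ?_
  rw [tsum_fiber DTree.root (fun r => (G.pbin X A r.root * treeProb G r) * gS G a n A)]
  refine Finset.sum_congr rfl fun B _ => ?_
  have h3 : ∀ r : {r : DTree N T // r.root = B},
      (G.pbin X A r.1.root * treeProb G r.1) * gS G a n A
        = (G.pbin X A B * gS G a n A) * treeProb G r.1 := fun r => by rw [r.2]; ring
  rw [tsum_congr h3, ENNReal.tsum_mul_left]
  show (G.pbin X A B * gS G a n A) * Zt G B = G.pbin X A B * gS G a n A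
  by_cases h : G.pbin X A B = 0
  · rw [h]; ring
  · rw [hZ h, mul_one]

lemma hS_succ (a : T) (n : ℕ) (X : N) :
    hS G a (n + 1) X = ∑ A, ∑ B, G.pbin X A B * hS G a n A := by
  rw [hS, tsum_list_cons _ (by simp)]
  have h1 : ∀ p : (N × N) × List (N × N),
      (if (p.1 :: p.2).length = n + 1
        then spineProb G X (p.1 :: p.2) * G.pterm (spineEnd X (p.1 :: p.2)) a else 0)
      = G.pbin X p.1.1 p.1.2
          * (if p.2.length = n
              then spineProb G p.1.1 p.2 * G.pterm (spineEnd p.1.1 p.2) a else 0) := by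
    rintro ⟨⟨A, B⟩, rest⟩
    show (if rest.length + 1 = n + 1
        then (G.pbin X A B * spineProb G A rest) * G.pterm (spineEnd A rest) a else 0) = _
    by_cases h : rest.length = n
    · rw [if_pos (by omega), if_pos h]; ring
    · rw [if_neg (by omega), if_neg h, mul_zero]
  rw [tsum_congr h1, ENNReal.tsum_prod (f := fun (q : N × N) rest =>
    G.pbin X q.1 q.2 * (if rest.length = n
      then spineProb G q.1 rest * G.pterm (spineEnd q.1 rest) a else 0))]
  have h2 : ∀ q : N × N,
      (∑' rest : List (N × N), G.pbin X q.1 q.2 * (if rest.length = n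
        then spineProb G q.1 rest * G.pterm (spineEnd q.1 rest) a else 0))
      = G.pbin X q.1 q.2 * hS G a n q.1 := fun q => ENNReal.tsum_mul_left
  rw [tsum_congr h2, tsum_fintype, Fintype.sum_prod_type]

lemma gS_eq_hS (hZ : ∀ {X' A B : N}, G.pbin X' A B ≠ 0 → Zt G B = 1) (a : T) :
    ∀ (n : ℕ) (X : N), gS G a n X = hS G a n X := by
  intro n
  induction n with
  | zero => intro X; rw [gS_zero, hS_zero]
  | succ n ih =>
    intro X
    rw [gS_succ G hZ, hS_succ G]
    exact Finset.sum_congr rfl fun A _ => Finset.sum_congr rfl fun B _ => by rw [ih A]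

lemma tsum_slice {α : Type*} (f : α → ℝ≥0∞) (len : α → ℕ) :
    ∑' x : α, f x = ∑' n : ℕ, ∑' x : α, if len x = n then f x else 0 := by
  have hsingle : ∀ x : α, (∑' n : ℕ, if len x = n then f x else 0) = f x := by
    intro x
    rw [tsum_eq_single (len x)]
    · rw [if_pos rfl]
    · intro n hn; rw [if_neg fun h => hn h.symm]
  calc ∑' x : α, f x
      = ∑' x : α, ∑' n : ℕ, if len x = n then f x else 0 :=
        tsum_congr fun x => (hsingle x).symm
    _ = ∑' n : ℕ, ∑' x : α, if len x = n then f x else 0 :=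
        ENNReal.tsum_comm (f := fun (x : α) (n : ℕ) => if len x = n then f x else 0)

lemma headSum_eq_tsum_gS (a : T) (X : N) :
    (∑' τ : {τ : DTree N T // τ.root = X ∧ τ.yield.head? = some a}, treeProb G τ.1)
      = ∑' n : ℕ, gS G a n X := by
  have h1 : (∑' τ : {τ : DTree N T // τ.root = X ∧ τ.yield.head? = some a}, treeProb G τ.1)
      = ∑' c : List (N × DTree N T), treeProb G (rebuild a X c) :=
    ((spineEquiv a X).symm.tsum_eq (fun τ => treeProb G τ.1)).symm
  rw [h1, tsum_slice (fun c => treeProb G (rebuild a X c)) List.length]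
  rfl

lemma tsum_hS_eq (a : T) (X : N) :
    (∑' n : ℕ, hS G a n X)
      = ∑' c : List (N × N), spineProb G X c * G.pterm (spineEnd X c) a := by
  rw [tsum_slice (fun c => spineProb G X c * G.pterm (spineEnd X c) a) List.length]
  rfl

lemma rhs_eq (a : T) (X : N) :
    (∑ Y : N, Elc G X Y * G.pterm Y a)
      = ∑' c : List (N × N), spineProb G X c * G.pterm (spineEnd X c) a := by
  rw [tsum_fiber (spineEnd X) (fun c => spineProb G X c * G.pterm (spineEnd X c) a)]
  refine Finset.sum_congr rfl fun Y _ => ?_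
  rw [Elc, ← ENNReal.tsum_mul_right]
  exact tsum_congr fun c => by rw [c.2]

/-- The sigma decomposition of trees by the tail of their yield. -/
def headEquiv (a : T) (X : N) :
    {τ : DTree N T // τ.root = X ∧ τ.yield.head? = some a}
      ≃ Σ u : List T, {τ : DTree N T // τ.root = X ∧ τ.yield = a :: u} where
  toFun τ := ⟨τ.1.yield.tail, ⟨τ.1, τ.2.1, (List.cons_head?_tail τ.2.2).symm⟩⟩
  invFun p := ⟨p.2.1, p.2.2.1, by rw [p.2.2.2]; rfl⟩
  left_inv τ := Subtype.ext rfl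
  right_inv p := Sigma.subtype_ext (by show (p.2.1.yield).tail = p.1; rw [p.2.2.2]; rfl) rfl

end AuxMachinery5

/-- For a tight, trim PCFG in CNF, a string `w = w₁ ⋯ w_N` and
`1 ≤ k ≤ N`, the single-token prefix probability satisfies
`p_π(k, k ∣ X) = ∑_{Y ∈ N} E_lc(Y ∣ X) · p(Y → w_k)` for every `X ∈ N`. -/
theorem prefixProb_single_token (G : CNFPCFG N T) (hTight : Tight G) (hTrim : Trim G)
    (w : List T) (k : ℕ) (h1 : 1 ≤ k) (hk : k ≤ w.length)
    (a : T) (ha : w[k - 1]? = some a) (X : N) :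
    prefixProb G w k k X = ∑ Y : N, Elc G X Y * G.pterm Y a := by
  classical
  have hZ : ∀ {X' A B : N}, G.pbin X' A B ≠ 0 → Zt G B = 1 :=
    fun h => (Zt_eq_one_of_rule G hTight hTrim h).2
  obtain ⟨j, rfl⟩ : ∃ j, k = j + 1 := ⟨k - 1, by omega⟩
  have hj : j < w.length := by omega
  have hgl : w[j]? = some a := by
    simpa using ha
  have hsub : substr w (j + 1) (j + 1) = [a] := by
    simp only [substr, Nat.add_sub_cancel]
    rw [List.take_succ, hgl]
    show (w.take j ++ [a]).drop j = [a]
    have hlen : (w.take j).length = j := by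
      rw [List.length_take]
      omega
    have hd := List.drop_left (l₁ := w.take j) (l₂ := [a])
    rw [hlen] at hd
    exact hd
  unfold prefixProb
  rw [hsub]
  calc (∑' (u : List T) (τ : {τ : DTree N T // τ.root = X ∧ τ.yield = a :: u}),
          treeProb G τ.1)
      = ∑' p : (Σ u : List T, {τ : DTree N T // τ.root = X ∧ τ.yield = a :: u}),
          treeProb G p.2.1 :=
        (ENNReal.tsum_sigma' (fun p : (Σ u : List T,
          {τ : DTree N T // τ.root = X ∧ τ.yield = a :: u}) => treeProb G p.2.1)).symm
    _ = ∑' τ : {τ : DTree N T // τ.root = X ∧ τ.yield.head? = some a}, treeProb G τ.1 :=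
        ((headEquiv a X).tsum_eq (fun p => treeProb G p.2.1)).symm
    _ = ∑' n : ℕ, gS G a n X := headSum_eq_tsum_gS G a X
    _ = ∑' n : ℕ, hS G a n X := tsum_congr fun n => gS_eq_hS G hZ a n X
    _ = ∑' c : List (N × N), spineProb G X c * G.pterm (spineEnd X c) a := tsum_hS_eq G a X
    _ = ∑ Y : N, Elc G X Y * G.pterm Y a := (rhs_eq G a X).symm
end
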